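/- arXiv:2407.01991 — 10 statements merged into one kernel-verified Lean document; each statement's English description precedes it below -/
import Mathlib

section
/- Let (X,d) be a pseudo-quasi-metric space with the midpoint property, let π : X × X → X be uniformly continuous, and let V : X × X → ℝ satisfy (i) V(x,y) = V(x,π(x,y)) + V(π(x,y),y) for all x,y; (ii) V(x,π(x,y))² + V(π(x,y),y)² ≤ V(x,z)² + V(z,y)² for all x,y,z; (iii) d(x,π(x,x)) = d(π(x,x),x) = 0 for all x. If for every ε > 0 there exists δ > 0 such that (1−ε)·d(x,y) ≤ V(x,y) ≤ (1+ε)·d(x,y) whenever d(x,y) < δ, then V(x,y) = d(x,y) for all x,y ∈ X, and π(x,y) is a midpoint between x and y for all x,y ∈ X. -/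
set_option maxHeartbeats 2000000

/-- Proposition 1 (second part): if `V` approximates `d` within every factor `1 ± ε` for
sufficiently close pairs, then `V = d` and `π` predicts midpoints. -/
theorem midpoint_actor_critic_exact {X : Type*}
    (d : X → X → ℝ) (π : X → X → X) (V : X → X → ℝ)
    (hd_refl : ∀ x, d x x = 0)
    (hd_nonneg : ∀ x y, 0 ≤ d x y)
    (hd_tri : ∀ x y z, d x z ≤ d x y + d y z)
    (hmid : ∀ x y, ∃ z, d x z = d x y / 2 ∧ d z y = d x y / 2)
    (hπ_uc : ∀ α > (0 : ℝ), ∃ β > (0 : ℝ), ∀ x y z, d y z < β →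
      d (π x y) (π x z) < α ∧ d (π y x) (π z x) < α)
    (hV_split : ∀ x y, V x y = V x (π x y) + V (π x y) y)
    (hV_min : ∀ x y z, V x (π x y) ^ 2 + V (π x y) y ^ 2 ≤ V x z ^ 2 + V z y ^ 2)
    (hπ_diag : ∀ x, d x (π x x) = 0 ∧ d (π x x) x = 0)
    (happrox : ∀ ε > (0 : ℝ), ∃ δ > (0 : ℝ), ∀ x y, d x y < δ →
      (1 - ε) * d x y ≤ V x y ∧ V x y ≤ (1 + ε) * d x y) :
    (∀ x y, V x y = d x y) ∧
    (∀ x y, d x (π x y) = d x y / 2 ∧ d (π x y) y = d x y / 2) := by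
  classical
  -- ## Global upper bound : V ≤ d
  have hVle : ∀ x y, V x y ≤ d x y := by
    intro x y
    have key : ∀ ε : ℝ, 0 < ε → V x y ≤ (1 + ε) * d x y := by
      intro ε hε
      obtain ⟨δ, hδ, happ⟩ := happrox ε hε
      have main : ∀ n : ℕ, ∀ a b : X, d a b < 2 ^ n * δ →
          -((1 + ε) * d a b) ≤ V a b ∧ V a b ≤ (1 + ε) * d a b := by
        intro n
        induction n with
        | zero =>
          intro a b h
          have h' : d a b < δ := by simpa using h
          have H := happ a b h'
          have hab := hd_nonneg a b
          exact ⟨by nlinarith, by nlinarith⟩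
        | succ n ih =>
          intro a b h
          obtain ⟨m, hm1, hm2⟩ := hmid a b
          have h2n : (0:ℝ) < 2 ^ n := by positivity
          have hd2 : d a b / 2 < 2 ^ n * δ := by
            rw [pow_succ] at h; nlinarith
          have A := ih a m (by rw [hm1]; exact hd2)
          have B := ih m b (by rw [hm2]; exact hd2)
          rw [hm1] at A; rw [hm2] at B
          have hmin := hV_min a b m
          have hsp := hV_split a b
          have hab := hd_nonneg a b
          have hA2 : (V a m) ^ 2 ≤ ((1 + ε) * (d a b / 2)) ^ 2 := by nlinarith [A.1, A.2]
          have hB2 : (V m b) ^ 2 ≤ ((1 + ε) * (d a b / 2)) ^ 2 := by nlinarith [B.1, B.2]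
          have hv2 : (V a (π a b) + V (π a b) b) ^ 2 ≤ ((1 + ε) * d a b) ^ 2 := by
            nlinarith [sq_nonneg (V a (π a b) - V (π a b) b), hmin, hA2, hB2]
          rw [hsp]
          constructor
          · nlinarith [hv2, hab, hε]
          · nlinarith [hv2, hab, hε]
      obtain ⟨n, hn⟩ := pow_unbounded_of_one_lt (d x y / δ) (by norm_num : (1:ℝ) < 2)
      rw [div_lt_iff₀ hδ] at hn
      exact (main n x y (by linarith)).2
    rcases eq_or_lt_of_le (hd_nonneg x y) with h0 | hpos
    · have := key 1 one_pos
      rw [← h0] at this ⊢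
      linarith
    · by_contra hc
      push_neg at hc
      have := key ((V x y - d x y) / (2 * d x y))
        (div_pos (by linarith) (by linarith))
      have hcc : (V x y - d x y) / (2 * d x y) * d x y = (V x y - d x y) / 2 := by
        field_simp
      nlinarith [this]
  -- ## chain lemma : dyadic points between x and y
  have chain : ∀ n : ℕ, ∀ j : ℕ, j ≤ 2 ^ n → ∀ x y : X,
      ∃ p, (2:ℝ) ^ n * d x p ≤ (j:ℝ) * d x y ∧
        (2:ℝ) ^ n * d p y ≤ ((2:ℝ) ^ n - (j:ℝ)) * d x y := by
    intro n
    induction n with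
    | zero =>
      intro j hj x y
      have hj' : j = 0 ∨ j = 1 := by
        have : j ≤ 1 := by simpa using hj
        omega
      rcases hj' with rfl | rfl
      · refine ⟨x, ?_, ?_⟩
        · simp [hd_refl]
        · simp
      · refine ⟨y, ?_, ?_⟩
        · simp
        · simp [hd_refl]
    | succ n ih =>
      intro j hj x y
      obtain ⟨m, hm1, hm2⟩ := hmid x y
      have h2n : (0:ℝ) < 2 ^ n := by positivity
      have hps : ((2:ℝ) ^ (n + 1)) = 2 * 2 ^ n := by rw [pow_succ]; ring
      by_cases hc : j ≤ 2 ^ n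
      · obtain ⟨p, hp1, hp2⟩ := ih j hc x m
        rw [hm1] at hp1 hp2
        refine ⟨p, ?_, ?_⟩
        · rw [hps]; push_cast; linarith
        · rw [hps]
          have t := hd_tri p m y
          have ht2 := mul_le_mul_of_nonneg_left t (le_of_lt h2n)
          rw [hm2] at ht2
          push_cast
          nlinarith [hp2, ht2]
      · push_neg at hc
        have hpow : (2:ℕ) ^ (n+1) = 2 ^ n * 2 := pow_succ 2 n
        have hc2 : j - 2 ^ n ≤ 2 ^ n := by omega
        obtain ⟨p, hp1, hp2⟩ := ih (j - 2 ^ n) hc2 m y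
        have hcast : ((j - 2 ^ n : ℕ):ℝ) = (j:ℝ) - 2 ^ n := by
          have h' : (2:ℕ) ^ n ≤ j := le_of_lt hc
          push_cast [Nat.cast_sub h']
          ring
        rw [hcast, hm2] at hp1
        rw [hcast, hm2] at hp2
        refine ⟨p, ?_, ?_⟩
        · rw [hps]
          have t := hd_tri x m p
          have ht2 := mul_le_mul_of_nonneg_left t (le_of_lt h2n)
          rw [hm1] at ht2
          nlinarith [hp1, ht2]
        · rw [hps]; nlinarith [hp2]
  -- ## base scale setup
  obtain ⟨δ₁, hδ₁, happ₁⟩ := happrox (1/10) (by norm_num)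
  obtain ⟨β₁, hβ₁, huc₁⟩ := hπ_uc δ₁ hδ₁
  set δ₀ := min δ₁ β₁ with hδ₀def
  have hδ₀ : 0 < δ₀ := lt_min hδ₁ hβ₁
  -- contraction at small scale
  have contract : ∀ x y, d x y < δ₀ →
      d x (π x y) < δ₁ ∧ d (π x y) y < δ₁ ∧
      d x (π x y) ≤ 7/8 * d x y ∧ d (π x y) y ≤ 7/8 * d x y := by
    intro x y hxy
    have hxyβ : d x y < β₁ := lt_of_lt_of_le hxy (min_le_right _ _)
    have hxyδ : d x y < δ₁ := lt_of_lt_of_le hxy (min_le_left _ _)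
    have h1 := (huc₁ x x y hxyβ).1
    have h3 := (huc₁ y x y hxyβ).2
    have hdx : d x (π x y) < δ₁ := by
      have t := hd_tri x (π x x) (π x y)
      have e := (hπ_diag x).1
      linarith
    have hdy : d (π x y) y < δ₁ := by
      have t := hd_tri (π x y) (π y y) y
      have e := (hπ_diag y).2
      linarith
    obtain ⟨m, hm1, hm2⟩ := hmid x y
    have hab := hd_nonneg x y
    have hdm1 : d x m < δ₁ := by rw [hm1]; linarith
    have hdm2 : d m y < δ₁ := by rw [hm2]; linarith
    have A := happ₁ x (π x y) hdx
    have B := happ₁ (π x y) y hdy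
    have C := happ₁ x m hdm1
    have Dm := happ₁ m y hdm2
    rw [hm1] at C; rw [hm2] at Dm
    have hmin := hV_min x y m
    have hu := hd_nonneg x (π x y)
    have hv := hd_nonneg (π x y) y
    have hC2 : (V x m) ^ 2 ≤ (11/10 * (d x y / 2)) ^ 2 := by nlinarith [C.1, C.2]
    have hD2 : (V m y) ^ 2 ≤ (11/10 * (d x y / 2)) ^ 2 := by nlinarith [Dm.1, Dm.2]
    have hA2 : (9/10 * d x (π x y)) ^ 2 ≤ (V x (π x y)) ^ 2 := by nlinarith [A.1, A.2, hu]
    have hB2 : (9/10 * d (π x y) y) ^ 2 ≤ (V (π x y) y) ^ 2 := by nlinarith [B.1, B.2, hv]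
    refine ⟨hdx, hdy, ?_, ?_⟩
    · nlinarith [hmin, hC2, hD2, hA2, sq_nonneg (V (π x y) y), hu, hab,
        mul_nonneg hab hab]
    · nlinarith [hmin, hC2, hD2, hB2, sq_nonneg (V x (π x y)), hv, hab,
        mul_nonneg hab hab]
  -- ## lower bound at small scale
  have lower_small : ∀ x y, d x y < δ₀ → d x y ≤ V x y := by
    have main : ∀ ε : ℝ, 0 < ε → ε < 1 → ∀ x y, d x y < δ₀ → (1 - ε) * d x y ≤ V x y := by
      intro ε hε hε1
      obtain ⟨δε, hδε, happε⟩ := happrox ε hε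
      have hrec : ∀ n : ℕ, ∀ x y, d x y < δ₀ → d x y < (8/7) ^ n * δε →
          (1 - ε) * d x y ≤ V x y := by
        intro n
        induction n with
        | zero =>
          intro x y _ h
          exact (happε x y (by simpa using h)).1
        | succ n ih =>
          intro x y h0 h
          obtain ⟨_, _, c1, c2⟩ := contract x y h0
          have hu := hd_nonneg x (π x y)
          have hv := hd_nonneg (π x y) y
          have hab := hd_nonneg x y
          have hpow : (0:ℝ) < (8/7) ^ n := by positivity
          rw [pow_succ] at h
          have e1 : d x (π x y) < δ₀ := by linarith
          have e2 : d x (π x y) < (8/7) ^ n * δε := by nlinarith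
          have e3 : d (π x y) y < δ₀ := by linarith
          have e4 : d (π x y) y < (8/7) ^ n * δε := by nlinarith
          have I1 := ih x (π x y) e1 e2
          have I2 := ih (π x y) y e3 e4
          have hsp := hV_split x y
          have htr := hd_tri x (π x y) y
          nlinarith [I1, I2, mul_nonneg (show (0:ℝ) ≤ 1 - ε by linarith)
            (show (0:ℝ) ≤ d x (π x y) + d (π x y) y - d x y by linarith)]
      intro x y h0
      obtain ⟨n, hn⟩ := pow_unbounded_of_one_lt (δ₀ / δε) (by norm_num : (1:ℝ) < 8/7)
      rw [div_lt_iff₀ hδε] at hn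
      exact hrec n x y h0 (by linarith)
    intro x y h0
    rcases eq_or_lt_of_le (hd_nonneg x y) with hz | hpos
    · have := main (1/2) (by norm_num) (by norm_num) x y h0
      rw [← hz] at this ⊢
      linarith
    · by_contra hcon
      push_neg at hcon
      set ε' := min ((d x y - V x y) / (2 * d x y)) (1/2) with hε'def
      have hε'pos : 0 < ε' :=
        lt_min (div_pos (by linarith) (by linarith)) (by norm_num)
      have hε'lt : ε' < 1 := lt_of_le_of_lt (min_le_right _ _) (by norm_num)
      have h2 := main ε' hε'pos hε'lt x y h0
      have h3 : ε' ≤ (d x y - V x y) / (2 * d x y) := min_le_left _ _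
      have h4 : ε' * d x y ≤ (d x y - V x y) / 2 := by
        have h5 := mul_le_mul_of_nonneg_right h3 (le_of_lt hpos)
        have h6 : (d x y - V x y) / (2 * d x y) * d x y = (d x y - V x y) / 2 := by
          have hne : d x y ≠ 0 := ne_of_gt hpos
          field_simp
        rw [h6] at h5
        exact h5
      nlinarith [h2]
  -- ## exactness at base scale
  have PD0 : ∀ x y, d x y ≤ δ₀ / 2 →
      V x y = d x y ∧ d x (π x y) = d x y / 2 ∧ d (π x y) y = d x y / 2 := by
    intro x y h
    have h0 : d x y < δ₀ := by linarith
    have hab := hd_nonneg x y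
    have hVeq : V x y = d x y := le_antisymm (hVle x y) (lower_small x y h0)
    obtain ⟨_, _, c1, c2⟩ := contract x y h0
    have hu := hd_nonneg x (π x y)
    have hv := hd_nonneg (π x y) y
    have e1 : d x (π x y) < δ₀ := by linarith
    have e2 : d (π x y) y < δ₀ := by linarith
    have Vu : V x (π x y) = d x (π x y) := le_antisymm (hVle _ _) (lower_small _ _ e1)
    have Vv : V (π x y) y = d (π x y) y := le_antisymm (hVle _ _) (lower_small _ _ e2)
    obtain ⟨m, hm1, hm2⟩ := hmid x y
    have em1 : d x m < δ₀ := by rw [hm1]; linarith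
    have em2 : d m y < δ₀ := by rw [hm2]; linarith
    have Vm1 : V x m = d x y / 2 := by
      have := le_antisymm (hVle x m) (lower_small x m em1); rw [this, hm1]
    have Vm2 : V m y = d x y / 2 := by
      have := le_antisymm (hVle m y) (lower_small m y em2); rw [this, hm2]
    have hmin := hV_min x y m
    rw [Vm1, Vm2, Vu, Vv] at hmin
    have hsp := hV_split x y
    rw [hVeq, Vu, Vv] at hsp
    have hsq : (d x (π x y) - d (π x y) y) ^ 2 ≤ 0 := by nlinarith
    have heq0 : d x (π x y) - d (π x y) y = 0 := by
      have h' := le_antisymm hsq (sq_nonneg _)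
      exact pow_eq_zero_iff (two_ne_zero) |>.mp h'
    exact ⟨hVeq, by linarith, by linarith⟩
  -- ## scale induction step
  have step : ∀ D : ℝ, 0 < D →
      (∀ x y, d x y ≤ D → V x y = d x y ∧ d x (π x y) = d x y / 2 ∧ d (π x y) y = d x y / 2) →
      ∀ x y, d x y ≤ 5/4 * D →
        V x y = d x y ∧ d x (π x y) = d x y / 2 ∧ d (π x y) y = d x y / 2 := by
    intro D hD PD
    obtain ⟨β₂, hβ₂, huc₂⟩ := hπ_uc (D / 20) (by positivity)
    -- march 1 : left half is short
    have march1 : ∀ k : ℕ, ∀ x y, d x y ≤ 5/4 * D → d x y < ((k:ℝ) + 1) * β₂ →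
        d x (π x y) ≤ 9/10 * D := by
      intro k
      induction k with
      | zero =>
        intro x y hγ h
        have h' : d x y < β₂ := by push_cast at h; linarith
        have h1 := (huc₂ x x y h').1
        have t := hd_tri x (π x x) (π x y)
        have e := (hπ_diag x).1
        linarith
      | succ k ih =>
        intro x y hγ h
        push_cast at h
        by_cases hsm : d x y < ((k:ℝ) + 1) * β₂
        · exact ih x y hγ hsm
        push_neg at hsm
        have hk0 : (0:ℝ) ≤ (k:ℝ) := Nat.cast_nonneg k
        have hdpos : 0 < d x y := lt_of_lt_of_le (by positivity) hsm
        have hgap : 0 < ((k:ℝ) + 2) * β₂ - d x y := by nlinarith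
        obtain ⟨n, hn⟩ := pow_unbounded_of_one_lt (d x y / (((k:ℝ) + 2) * β₂ - d x y))
          (by norm_num : (1:ℝ) < 2)
        rw [div_lt_iff₀ hgap] at hn
        have h2n : (0:ℝ) < 2 ^ n := by positivity
        set A := ((2:ℝ) ^ n * d x y - 2 ^ n * β₂) / d x y with hAdef
        have hβd : β₂ ≤ d x y := by nlinarith
        have hApos : 0 ≤ A := by
          apply div_nonneg _ (le_of_lt hdpos)
          nlinarith
        set j := ⌊A⌋₊ + 1 with hjdef
        have hjA : A < (j:ℝ) := by
          rw [hjdef]; exact_mod_cast Nat.lt_floor_add_one A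
        have hjA' : (j:ℝ) ≤ A + 1 := by
          have := Nat.floor_le hApos
          rw [hjdef]; push_cast; linarith
        have P1 : (2:ℝ) ^ n * d x y - 2 ^ n * β₂ < (j:ℝ) * d x y := by
          rw [hAdef, div_lt_iff₀ hdpos] at hjA; linarith
        have hAd : A * d x y = (2:ℝ) ^ n * d x y - 2 ^ n * β₂ :=
          div_mul_cancel₀ _ (ne_of_gt hdpos)
        have P2 : (j:ℝ) * d x y ≤ (2:ℝ) ^ n * d x y - 2 ^ n * β₂ + d x y := by
          have h5 := mul_le_mul_of_nonneg_right hjA' (le_of_lt hdpos)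
          rw [add_mul, one_mul, hAd] at h5
          linarith
        have P3 : (j:ℝ) * d x y < 2 ^ n * (((k:ℝ) + 1) * β₂) := by nlinarith
        have hjle : j ≤ 2 ^ n := by
          have h1 : (j:ℝ) * d x y < 2 ^ n * d x y := by nlinarith
          have h2 : (j:ℝ) < (2:ℝ) ^ n := lt_of_mul_lt_mul_right h1 (le_of_lt hdpos)
          have hjlt : j < 2 ^ n := by exact_mod_cast h2
          exact le_of_lt hjlt
        obtain ⟨p, hp1, hp2⟩ := chain n j hjle x y
        have hxp : d x p < ((k:ℝ) + 1) * β₂ := by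
          have h1 : (2:ℝ) ^ n * d x p < 2 ^ n * (((k:ℝ) + 1) * β₂) := lt_of_le_of_lt hp1 P3
          exact lt_of_mul_lt_mul_left h1 (le_of_lt h2n)
        have hpy : d p y < β₂ := by
          have h1 : (2:ℝ) ^ n * d p y < 2 ^ n * β₂ := by nlinarith
          exact lt_of_mul_lt_mul_left h1 (le_of_lt h2n)
        have hxp' : d x p ≤ 5/4 * D := by
          have hjr : (j:ℝ) ≤ (2:ℝ) ^ n := by exact_mod_cast hjle
          have h1 : (2:ℝ) ^ n * d x p ≤ 2 ^ n * d x y := by nlinarith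
          have h2 := le_of_mul_le_mul_left h1 h2n
          linarith
        have IH := ih x p hxp' hxp
        have hUC := (huc₂ x p y hpy).1
        have gle : d x (π x y) ≤ D := by
          have t := hd_tri x (π x p) (π x y)
          linarith
        obtain ⟨m, hm1, hm2⟩ := hmid x y
        have hmD : d x m ≤ D := by rw [hm1]; linarith
        have hmD2 : d m y ≤ D := by rw [hm2]; linarith
        have Vm1 : V x m = d x y / 2 := by have := (PD x m hmD).1; rw [this, hm1]
        have Vm2 : V m y = d x y / 2 := by have := (PD m y hmD2).1; rw [this, hm2]
        have Vg : V x (π x y) = d x (π x y) := (PD x (π x y) gle).1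
        have hmin := hV_min x y m
        rw [Vm1, Vm2, Vg] at hmin
        nlinarith [hmin, sq_nonneg (V (π x y) y), hd_nonneg x (π x y), hγ,
          hd_nonneg x y, hD, mul_pos hD hD,
          mul_nonneg (show (0:ℝ) ≤ 5/4 * D - d x y by linarith)
            (show (0:ℝ) ≤ 5/4 * D + d x y by linarith)]
    -- march 2 : right half is short
    have march2 : ∀ k : ℕ, ∀ x y, d x y ≤ 5/4 * D → d x y < ((k:ℝ) + 1) * β₂ →
        d (π x y) y ≤ 9/10 * D := by
      intro k
      induction k with
      | zero =>
        intro x y hγ h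
        have h' : d x y < β₂ := by push_cast at h; linarith
        have h1 := (huc₂ y x y h').2
        have t := hd_tri (π x y) (π y y) y
        have e := (hπ_diag y).2
        linarith
      | succ k ih =>
        intro x y hγ h
        push_cast at h
        by_cases hsm : d x y < ((k:ℝ) + 1) * β₂
        · exact ih x y hγ hsm
        push_neg at hsm
        have hk0 : (0:ℝ) ≤ (k:ℝ) := Nat.cast_nonneg k
        have hdpos : 0 < d x y := lt_of_lt_of_le (by positivity) hsm
        have hgap : 0 < ((k:ℝ) + 2) * β₂ - d x y := by nlinarith
        obtain ⟨n, hn⟩ := pow_unbounded_of_one_lt (d x y / (((k:ℝ) + 2) * β₂ - d x y))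
          (by norm_num : (1:ℝ) < 2)
        rw [div_lt_iff₀ hgap] at hn
        have h2n : (0:ℝ) < 2 ^ n := by positivity
        set A := ((2:ℝ) ^ n * d x y - 2 ^ n * (((k:ℝ) + 1) * β₂)) / d x y with hAdef
        have hβd : β₂ ≤ d x y := by nlinarith
        have hApos : 0 ≤ A := by
          apply div_nonneg _ (le_of_lt hdpos)
          nlinarith
        set j := ⌊A⌋₊ + 1 with hjdef
        have hjA : A < (j:ℝ) := by
          rw [hjdef]; exact_mod_cast Nat.lt_floor_add_one A
        have hjA' : (j:ℝ) ≤ A + 1 := by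
          have := Nat.floor_le hApos
          rw [hjdef]; push_cast; linarith
        have P1 : (2:ℝ) ^ n * d x y - 2 ^ n * (((k:ℝ) + 1) * β₂) < (j:ℝ) * d x y := by
          rw [hAdef, div_lt_iff₀ hdpos] at hjA; linarith
        have hAd : A * d x y = (2:ℝ) ^ n * d x y - 2 ^ n * (((k:ℝ) + 1) * β₂) :=
          div_mul_cancel₀ _ (ne_of_gt hdpos)
        have P2 : (j:ℝ) * d x y ≤ (2:ℝ) ^ n * d x y - 2 ^ n * (((k:ℝ) + 1) * β₂) + d x y := by
          have h5 := mul_le_mul_of_nonneg_right hjA' (le_of_lt hdpos)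
          rw [add_mul, one_mul, hAd] at h5
          linarith
        have P3 : (j:ℝ) * d x y < 2 ^ n * β₂ := by nlinarith
        have hjle : j ≤ 2 ^ n := by
          have h1 : (j:ℝ) * d x y < 2 ^ n * d x y := by nlinarith
          have h2 : (j:ℝ) < (2:ℝ) ^ n := lt_of_mul_lt_mul_right h1 (le_of_lt hdpos)
          have hjlt : j < 2 ^ n := by exact_mod_cast h2
          exact le_of_lt hjlt
        obtain ⟨p, hp1, hp2⟩ := chain n j hjle x y
        have hxp : d x p < β₂ := by
          have h1 : (2:ℝ) ^ n * d x p < 2 ^ n * β₂ := lt_of_le_of_lt hp1 P3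
          exact lt_of_mul_lt_mul_left h1 (le_of_lt h2n)
        have hpy : d p y < ((k:ℝ) + 1) * β₂ := by
          have h1 : (2:ℝ) ^ n * d p y < 2 ^ n * (((k:ℝ) + 1) * β₂) := by nlinarith
          exact lt_of_mul_lt_mul_left h1 (le_of_lt h2n)
        have hpy' : d p y ≤ 5/4 * D := by
          have hjr : (0:ℝ) ≤ (j:ℝ) := Nat.cast_nonneg j
          have h1 : (2:ℝ) ^ n * d p y ≤ 2 ^ n * d x y := by nlinarith
          have h2 := le_of_mul_le_mul_left h1 h2n
          linarith
        have IH := ih p y hpy' hpy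
        have hUC := (huc₂ y x p hxp).2
        have gle : d (π x y) y ≤ D := by
          have t := hd_tri (π x y) (π p y) y
          linarith
        obtain ⟨m, hm1, hm2⟩ := hmid x y
        have hmD : d x m ≤ D := by rw [hm1]; linarith
        have hmD2 : d m y ≤ D := by rw [hm2]; linarith
        have Vm1 : V x m = d x y / 2 := by have := (PD x m hmD).1; rw [this, hm1]
        have Vm2 : V m y = d x y / 2 := by have := (PD m y hmD2).1; rw [this, hm2]
        have Vg : V (π x y) y = d (π x y) y := (PD (π x y) y gle).1
        have hmin := hV_min x y m
        rw [Vm1, Vm2, Vg] at hmin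
        nlinarith [hmin, sq_nonneg (V x (π x y)), hd_nonneg (π x y) y, hγ,
          hd_nonneg x y, hD, mul_pos hD hD,
          mul_nonneg (show (0:ℝ) ≤ 5/4 * D - d x y by linarith)
            (show (0:ℝ) ≤ 5/4 * D + d x y by linarith)]
    -- conclude the step
    intro x y hxy
    obtain ⟨k, hk⟩ := exists_nat_gt (d x y / β₂)
    have hk' : d x y < ((k:ℝ) + 1) * β₂ := by
      rw [div_lt_iff₀ hβ₂] at hk
      nlinarith
    have g1 := march1 k x y hxy hk'
    have g2 := march2 k x y hxy hk'
    have hgD : d x (π x y) ≤ D := by linarith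
    have hhD : d (π x y) y ≤ D := by linarith
    have Vu := (PD x (π x y) hgD).1
    have Vv := (PD (π x y) y hhD).1
    have hsp := hV_split x y
    have htr := hd_tri x (π x y) y
    have hVeq : V x y = d x y := by
      have hle := hVle x y
      have hge : d x y ≤ V x y := by rw [hsp, Vu, Vv]; linarith
      linarith
    obtain ⟨m, hm1, hm2⟩ := hmid x y
    have hab := hd_nonneg x y
    have hmD : d x m ≤ D := by rw [hm1]; linarith
    have hmD2 : d m y ≤ D := by rw [hm2]; linarith
    have Vm1 : V x m = d x y / 2 := by have := (PD x m hmD).1; rw [this, hm1]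
    have Vm2 : V m y = d x y / 2 := by have := (PD m y hmD2).1; rw [this, hm2]
    have hmin := hV_min x y m
    rw [Vm1, Vm2, Vu, Vv] at hmin
    have hsum : d x y = d x (π x y) + d (π x y) y := by rw [← hVeq, hsp, Vu, Vv]
    have hsq : (d x (π x y) - d (π x y) y) ^ 2 ≤ 0 := by nlinarith
    have heq0 : d x (π x y) - d (π x y) y = 0 := by
      have h' := le_antisymm hsq (sq_nonneg _)
      exact pow_eq_zero_iff (two_ne_zero) |>.mp h'
    exact ⟨hVeq, by linarith, by linarith⟩
  -- ## assemble
  have mainP : ∀ k : ℕ, ∀ x y, d x y ≤ (5/4) ^ k * (δ₀ / 2) →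
      V x y = d x y ∧ d x (π x y) = d x y / 2 ∧ d (π x y) y = d x y / 2 := by
    intro k
    induction k with
    | zero => intro x y h; exact PD0 x y (by simpa using h)
    | succ k ih =>
      have hpos : (0:ℝ) < (5/4) ^ k * (δ₀ / 2) := by positivity
      intro x y h
      refine step ((5/4) ^ k * (δ₀ / 2)) hpos ih x y ?_
      calc d x y ≤ (5/4) ^ (k+1) * (δ₀ / 2) := h
        _ = 5/4 * ((5/4) ^ k * (δ₀ / 2)) := by rw [pow_succ]; ring
  have cover : ∀ x y : X, ∃ k : ℕ, d x y ≤ (5/4) ^ k * (δ₀ / 2) := by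
    intro x y
    obtain ⟨k, hk⟩ := pow_unbounded_of_one_lt (d x y / (δ₀ / 2)) (by norm_num : (1:ℝ) < 5/4)
    rw [div_lt_iff₀ (by positivity)] at hk
    exact ⟨k, by linarith⟩
  constructor
  · intro x y
    obtain ⟨k, hk⟩ := cover x y
    exact (mainP k x y hk).1
  · intro x y
    obtain ⟨k, hk⟩ := cover x y
    exact ⟨(mainP k x y hk).2.1, (mainP k x y hk).2.2⟩
end

section
/- Let (X,d) be a pseudo-quasi-metric space with the midpoint property, and let π : X × X → X and V : X × X → ℝ satisfy (i) V(x,y) = V(x,π(x,y)) + V(π(x,y),y) for all x,y, and (ii) V(x,π(x,y))² + V(π(x,y),y)² ≤ V(x,z)² + V(z,y)² for all x,y,z. Let ε > 0 and δ > 0. If |V(x,y)| ≤ (1+ε)·d(x,y) whenever d(x,y) < δ, then |V(x,y)| ≤ (1+ε)·d(x,y) for all x,y ∈ X. -/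
/-- The upper bound `|V(x,y)| ≤ (1+ε)·d(x,y)` propagates from close pairs to all pairs. -/
theorem midpoint_upper_bound_local_to_global {X : Type*}
    (d : X → X → ℝ) (π : X → X → X) (V : X → X → ℝ)
    (hd_refl : ∀ x, d x x = 0)
    (hd_nonneg : ∀ x y, 0 ≤ d x y)
    (hd_tri : ∀ x y z, d x z ≤ d x y + d y z)
    (hmid : ∀ x y, ∃ z, d x z = d x y / 2 ∧ d z y = d x y / 2)
    (hV_split : ∀ x y, V x y = V x (π x y) + V (π x y) y)
    (hV_min : ∀ x y z, V x (π x y) ^ 2 + V (π x y) y ^ 2 ≤ V x z ^ 2 + V z y ^ 2)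
    (ε δ : ℝ) (hε : 0 < ε) (hδ : 0 < δ)
    (hlocal : ∀ x y, d x y < δ → |V x y| ≤ (1 + ε) * d x y) :
    ∀ x y, |V x y| ≤ (1 + ε) * d x y := by
  have key : ∀ n : ℕ, ∀ x y, d x y < 2 ^ n * δ → |V x y| ≤ (1 + ε) * d x y := by
    intro n
    induction n with
    | zero => simpa using hlocal
    | succ n ih =>
      intro x y hxy
      obtain ⟨z, hz1, hz2⟩ := hmid x y
      have hhalf : d x y / 2 < 2 ^ n * δ := by
        rw [pow_succ] at hxy; linarith
      have hb1 := ih x z (by rw [hz1]; exact hhalf)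
      have hb2 := ih z y (by rw [hz2]; exact hhalf)
      rw [hz1] at hb1
      rw [hz2] at hb2
      have hmin := hV_min x y z
      have hsplit := hV_split x y
      have hVd : 0 ≤ (1 + ε) * d x y :=
        mul_nonneg (by linarith) (hd_nonneg x y)
      have hsq : V x y ^ 2 ≤ ((1 + ε) * d x y) ^ 2 := by
        have h1 : V x z ^ 2 ≤ ((1 + ε) * (d x y / 2)) ^ 2 := by
          have := abs_nonneg (V x z)
          nlinarith [sq_abs (V x z)]
        have h2 : V z y ^ 2 ≤ ((1 + ε) * (d x y / 2)) ^ 2 := by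
          have := abs_nonneg (V z y)
          nlinarith [sq_abs (V z y)]
        rw [hsplit]
        nlinarith [sq_nonneg (V x (π x y) - V (π x y) y)]
      have := abs_nonneg (V x y)
      nlinarith [sq_abs (V x y)]
  intro x y
  obtain ⟨n, hn⟩ := pow_unbounded_of_one_lt ((d x y + 1) / δ) (by norm_num : (1:ℝ) < 2)
  exact key n x y (by rw [div_lt_iff₀ hδ] at hn; linarith)
end

section
/- Let (X,d) be a pseudo-quasi-metric space, and let π_i : X × X → X and V_i : X × X → ℝ (i ∈ ℕ) satisfy, for all i and all x,y,z ∈ X: V_i(x,π_i(x,y))² + V_i(π_i(x,y),y)² ≤ V_i(x,z)² + V_i(z,y)², and V_{i+1}(x,y) = V_i(x,π_i(x,y)) + V_i(π_i(x,y),y). Assume the family (V_i)_i is equicontinuous, and that there are functions π : X × X → X and V : X × X → ℝ with d(π(x,y),π_i(x,y)) → 0 and V_i(x,y) → V(x,y) as i → ∞, for all x,y ∈ X. Then for all x,y,z ∈ X: V(x,π(x,y))² + V(π(x,y),y)² ≤ V(x,z)² + V(z,y)², and V(x,y) = V(x,π(x,y)) + V(π(x,y),y). -/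
open Filter

/-- Lemma 1, part 1: the limit functions of the actor-critic iteration satisfy
the argmin and splitting equations. -/
theorem limit_satisfies_functional_equations {X : Type*}
    (d : X → X → ℝ)
    (hd_refl : ∀ x, d x x = 0)
    (hd_nonneg : ∀ x y, 0 ≤ d x y)
    (hd_tri : ∀ x y z, d x z ≤ d x y + d y z)
    (πi : ℕ → X → X → X) (Vi : ℕ → X → X → ℝ)
    (hmin : ∀ i x y z, Vi i x (πi i x y) ^ 2 + Vi i (πi i x y) y ^ 2 ≤
      Vi i x z ^ 2 + Vi i z y ^ 2)
    (hrec : ∀ i x y, Vi (i + 1) x y = Vi i x (πi i x y) + Vi i (πi i x y) y)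
    (hequi : ∀ x y, ∀ ε > (0 : ℝ), ∃ δ > (0 : ℝ), ∀ i x' y',
      d x x' < δ → d y y' < δ → |Vi i x y - Vi i x' y'| < ε)
    (π : X → X → X) (V : X → X → ℝ)
    (hπ_lim : ∀ x y, Tendsto (fun i => d (π x y) (πi i x y)) atTop (nhds 0))
    (hV_lim : ∀ x y, Tendsto (fun i => Vi i x y) atTop (nhds (V x y))) :
    ∀ x y z, (V x (π x y) ^ 2 + V (π x y) y ^ 2 ≤ V x z ^ 2 + V z y ^ 2) ∧
      V x y = V x (π x y) + V (π x y) y := by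
  have hdlt : ∀ x y (δ : ℝ), 0 < δ → ∀ᶠ n in atTop, d (π x y) (πi n x y) < δ := by
    intro x y δ hδ
    obtain ⟨N, hN⟩ := (Metric.tendsto_atTop.mp (hπ_lim x y)) δ hδ
    refine eventually_atTop.mpr ⟨N, fun n hn => ?_⟩
    have := hN n hn
    rwa [Real.dist_eq, sub_zero, abs_of_nonneg (hd_nonneg _ _)] at this
  have hA : ∀ x y, Tendsto (fun i => Vi i x (πi i x y)) atTop (nhds (V x (π x y))) := by
    intro x y
    have hdiff : Tendsto (fun i => Vi i x (πi i x y) - Vi i x (π x y)) atTop (nhds 0) := by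
      rw [Metric.tendsto_atTop]
      intro ε hε
      obtain ⟨δ, hδ, hδ'⟩ := hequi x (π x y) ε hε
      obtain ⟨N, hN⟩ := eventually_atTop.mp (hdlt x y δ hδ)
      refine ⟨N, fun n hn => ?_⟩
      have h := hδ' n x (πi n x y) (by rw [hd_refl]; exact hδ) (hN n hn)
      rw [Real.dist_eq, sub_zero, abs_sub_comm]
      exact h
    have := hdiff.add (hV_lim x (π x y))
    simpa using this
  have hB : ∀ x y, Tendsto (fun i => Vi i (πi i x y) y) atTop (nhds (V (π x y) y)) := by
    intro x y
    have hdiff : Tendsto (fun i => Vi i (πi i x y) y - Vi i (π x y) y) atTop (nhds 0) := by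
      rw [Metric.tendsto_atTop]
      intro ε hε
      obtain ⟨δ, hδ, hδ'⟩ := hequi (π x y) y ε hε
      obtain ⟨N, hN⟩ := eventually_atTop.mp (hdlt x y δ hδ)
      refine ⟨N, fun n hn => ?_⟩
      have h := hδ' n (πi n x y) y (hN n hn) (by rw [hd_refl]; exact hδ)
      rw [Real.dist_eq, sub_zero, abs_sub_comm]
      exact h
    have := hdiff.add (hV_lim (π x y) y)
    simpa using this
  intro x y z
  constructor
  · exact le_of_tendsto_of_tendsto' (((hA x y).pow 2).add ((hB x y).pow 2))
      (((hV_lim x z).pow 2).add ((hV_lim z y).pow 2)) (fun i => hmin i x y z)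
  · have hL : Tendsto (fun i => Vi (i + 1) x y) atTop (nhds (V x y)) :=
      (hV_lim x y).comp (tendsto_add_atTop_nat 1)
    have hR : Tendsto (fun i => Vi (i + 1) x y) atTop
        (nhds (V x (π x y) + V (π x y) y)) := by
      have := (hA x y).add (hB x y)
      simpa [hrec] using this
    exact tendsto_nhds_unique hL hR
end

section
/- Let (X,d) be a weakly symmetric pseudo-quasi-metric space, and let π_i : X × X → X and V_i : X × X → ℝ (i ∈ ℕ) satisfy, for all i and all x,y,z ∈ X: V_i(x,π_i(x,y))² + V_i(π_i(x,y),y)² ≤ V_i(x,z)² + V_i(z,y)², and V_{i+1}(x,y) = V_i(x,π_i(x,y)) + V_i(π_i(x,y),y). Assume V_0(x,x) = 0, V_0(x,y) ≥ 0, and (V_0(x,y) = 0 implies d(x,y) = 0) for all x,y ∈ X, and that π : X × X → X satisfies d(π(x,x),π_i(x,x)) → 0 as i → ∞ for every x ∈ X. Then d(x,π(x,x)) = d(π(x,x),x) = 0 for every x ∈ X. -/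
open Filter

/-- Lemma 1, part 2: the limit actor `π` maps diagonal pairs to points at distance zero. -/
theorem limit_actor_diagonal {X : Type*}
    (d : X → X → ℝ)
    (hd_refl : ∀ x, d x x = 0)
    (hd_nonneg : ∀ x y, 0 ≤ d x y)
    (hd_tri : ∀ x y z, d x z ≤ d x y + d y z)
    (hws : ∀ (x : X) (y : ℕ → X), Tendsto (fun i => d x (y i)) atTop (nhds 0) →
      Tendsto (fun i => d (y i) x) atTop (nhds 0))
    (πi : ℕ → X → X → X) (Vi : ℕ → X → X → ℝ)
    (hmin : ∀ i x y z, Vi i x (πi i x y) ^ 2 + Vi i (πi i x y) y ^ 2 ≤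
      Vi i x z ^ 2 + Vi i z y ^ 2)
    (hrec : ∀ i x y, Vi (i + 1) x y = Vi i x (πi i x y) + Vi i (πi i x y) y)
    (hV0_diag : ∀ x, Vi 0 x x = 0)
    (hV0_nonneg : ∀ x y, 0 ≤ Vi 0 x y)
    (hV0_zero : ∀ x y, Vi 0 x y = 0 → d x y = 0)
    (π : X → X → X)
    (hπ_lim : ∀ x, Tendsto (fun i => d (π x x) (πi i x x)) atTop (nhds 0)) :
    ∀ x, d x (π x x) = 0 ∧ d (π x x) x = 0 := by
  -- Key induction: V_i is nonneg, vanishes on diagonal, and V_i = 0 → d = 0.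
  have key : ∀ i, (∀ x y, 0 ≤ Vi i x y) ∧ (∀ x, Vi i x x = 0) ∧
      (∀ x y, Vi i x y = 0 → d x y = 0) := by
    intro i
    induction i with
    | zero => exact ⟨hV0_nonneg, hV0_diag, hV0_zero⟩
    | succ n ih =>
      obtain ⟨hnn, hdiag, hzero⟩ := ih
      have hboth : ∀ x, Vi n x (πi n x x) = 0 ∧ Vi n (πi n x x) x = 0 := by
        intro x
        have h := hmin n x x x
        rw [hdiag x] at h
        simp only [ne_eq, OfNat.ofNat_ne_zero, not_false_eq_true, zero_pow, add_zero] at h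
        have h1 : Vi n x (πi n x x) ^ 2 = 0 := by nlinarith [sq_nonneg (Vi n x (πi n x x)), sq_nonneg (Vi n (πi n x x) x)]
        have h2 : Vi n (πi n x x) x ^ 2 = 0 := by nlinarith [sq_nonneg (Vi n x (πi n x x)), sq_nonneg (Vi n (πi n x x) x)]
        exact ⟨pow_eq_zero_iff two_ne_zero |>.mp h1, pow_eq_zero_iff two_ne_zero |>.mp h2⟩
      refine ⟨fun x y => ?_, fun x => ?_, fun x y h => ?_⟩
      · rw [hrec]; exact add_nonneg (hnn _ _) (hnn _ _)
      · rw [hrec, (hboth x).1, (hboth x).2, add_zero]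
      · rw [hrec] at h
        have h1 : Vi n x (πi n x y) = 0 := by
          have := hnn x (πi n x y); have := hnn (πi n x y) y; linarith
        have h2 : Vi n (πi n x y) y = 0 := by
          have := hnn x (πi n x y); have := hnn (πi n x y) y; linarith
        linarith [hd_nonneg x y, hd_tri x (πi n x y) y,
          (hzero _ _ h1 : d x (πi n x y) = 0), (hzero _ _ h2 : d (πi n x y) y = 0)]
  -- So d x (πi i x x) = 0 = d (πi i x x) x for all i.
  have hdzero : ∀ i x, d x (πi i x x) = 0 ∧ d (πi i x x) x = 0 := by
    intro i x
    obtain ⟨hnn, hdiag, hzero⟩ := key i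
    have h := hmin i x x x
    rw [hdiag x] at h
    have h1 : Vi i x (πi i x x) = 0 := by
      nlinarith [sq_nonneg (Vi i x (πi i x x)), sq_nonneg (Vi i (πi i x x) x),
        sq_abs (Vi i x (πi i x x)), abs_nonneg (Vi i x (πi i x x)), hnn x (πi i x x)]
    have h2 : Vi i (πi i x x) x = 0 := by
      nlinarith [sq_nonneg (Vi i x (πi i x x)), sq_nonneg (Vi i (πi i x x) x),
        hnn (πi i x x) x]
    exact ⟨hzero _ _ h1, hzero _ _ h2⟩
  intro x
  have hlim := hπ_lim x
  have hlim' := hws (π x x) (fun i => πi i x x) hlim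
  constructor
  · -- d x (π x x) ≤ d x (πi i x x) + d (πi i x x) (π x x) = d (πi i x x) (π x x) → 0
    have hle : ∀ i, d x (π x x) ≤ d (πi i x x) (π x x) := by
      intro i
      have := hd_tri x (πi i x x) (π x x)
      rw [(hdzero i x).1] at this; linarith
    have : Tendsto (fun _ : ℕ => d x (π x x)) atTop (nhds 0) :=
      squeeze_zero (fun _ => hd_nonneg _ _) hle hlim'
    exact tendsto_nhds_unique tendsto_const_nhds this
  · have hle : ∀ i, d (π x x) x ≤ d (π x x) (πi i x x) := by
      intro i
      have := hd_tri (π x x) (πi i x x) x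
      rw [(hdzero i x).2] at this; linarith
    have : Tendsto (fun _ : ℕ => d (π x x) x) atTop (nhds 0) :=
      squeeze_zero (fun _ => hd_nonneg _ _) hle hlim
    exact tendsto_nhds_unique tendsto_const_nhds this
end

section
/- Let (X,d) be a pseudo-quasi-metric space, and let π_i : X × X → X and V_i : X × X → ℝ (i ∈ ℕ) satisfy, for all i and all x,y,z ∈ X: V_i(x,π_i(x,y))² + V_i(π_i(x,y),y)² ≤ V_i(x,z)² + V_i(z,y)², and V_{i+1}(x,y) = V_i(x,π_i(x,y)) + V_i(π_i(x,y),y). Assume V_i(x,y) → V(x,y) as i → ∞ for all x,y ∈ X. Let ε, δ > 0 and suppose that for all x,y ∈ X, V_0(x,y) < δ implies d(x,y) ≤ (1+ε)·V_0(x,y). Then for all x,y ∈ X, V(x,y) < δ implies d(x,y) ≤ (1+ε)·V(x,y). -/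
open Filter

/-- Lemma 1, part 3: the lower-bound property of `V₀` is inherited by the limit `V`. -/
theorem limit_lower_bound {X : Type*}
    (d : X → X → ℝ)
    (hd_refl : ∀ x, d x x = 0)
    (hd_nonneg : ∀ x y, 0 ≤ d x y)
    (hd_tri : ∀ x y z, d x z ≤ d x y + d y z)
    (πi : ℕ → X → X → X) (Vi : ℕ → X → X → ℝ)
    (hmin : ∀ i x y z, Vi i x (πi i x y) ^ 2 + Vi i (πi i x y) y ^ 2 ≤
      Vi i x z ^ 2 + Vi i z y ^ 2)
    (hrec : ∀ i x y, Vi (i + 1) x y = Vi i x (πi i x y) + Vi i (πi i x y) y)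
    (V : X → X → ℝ)
    (hV_lim : ∀ x y, Tendsto (fun i => Vi i x y) atTop (nhds (V x y)))
    (ε δ : ℝ) (hε : 0 < ε) (hδ : 0 < δ)
    (h0 : ∀ x y, Vi 0 x y < δ → d x y ≤ (1 + ε) * Vi 0 x y) :
    ∀ x y, V x y < δ → d x y ≤ (1 + ε) * V x y := by
  have key : ∀ i x y, Vi i x y < δ → d x y ≤ (1 + ε) * Vi i x y := by
    intro i
    induction i with
    | zero => exact h0
    | succ n ih =>
      intro x y hxy
      set p := πi n x y with hp
      rw [hrec] at hxy ⊢
      set a := Vi n x p with ha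
      set b := Vi n p y with hb
      have hε1 : 0 < 1 + ε := by linarith
      have hann : 0 ≤ a := by
        by_contra h
        push_neg at h
        have := ih x p (by linarith)
        nlinarith [hd_nonneg x p]
      have hbnn : 0 ≤ b := by
        by_contra h
        push_neg at h
        have := ih p y (by linarith)
        nlinarith [hd_nonneg p y]
      have h1 := ih x p (by linarith)
      have h2 := ih p y (by linarith)
      have := hd_tri x p y
      linarith
  intro x y hV
  have hev : ∀ᶠ i in atTop, Vi i x y < δ :=
    (hV_lim x y).eventually (Filter.Tendsto.eventually_lt_const hV tendsto_id)
  have hev2 : ∀ᶠ i in atTop, d x y ≤ (1 + ε) * Vi i x y :=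
    hev.mono fun i hi => key i x y hi
  exact ge_of_tendsto (((hV_lim x y).const_mul (1 + ε))) hev2
end

section
/- Let (X,d) be a pseudo-quasi-metric space with the midpoint property, and let π_i : X × X → X and V_i : X × X → ℝ (i ∈ ℕ) satisfy, for all i and all x,y,z ∈ X: V_i(x,π_i(x,y))² + V_i(π_i(x,y),y)² ≤ V_i(x,z)² + V_i(z,y)², and V_{i+1}(x,y) = V_i(x,π_i(x,y)) + V_i(π_i(x,y),y). Assume V_0(x,y) ≥ 0 for all x,y ∈ X, and V_i(x,y) → V(x,y) as i → ∞ for all x,y ∈ X. Let ε, δ > 0 and suppose that for all x,y ∈ X, d(x,y) < δ implies V_0(x,y) ≤ (1+ε)·d(x,y). Then for all x,y ∈ X, d(x,y) < δ implies V(x,y) ≤ (1+ε)·d(x,y). -/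
open Filter

/-- Lemma 1, part 4: the upper-bound property of `V₀` on close pairs
is inherited by the limit `V`. -/
theorem limit_upper_bound {X : Type*}
    (d : X → X → ℝ)
    (hd_refl : ∀ x, d x x = 0)
    (hd_nonneg : ∀ x y, 0 ≤ d x y)
    (hd_tri : ∀ x y z, d x z ≤ d x y + d y z)
    (hmid : ∀ x y, ∃ z, d x z = d x y / 2 ∧ d z y = d x y / 2)
    (πi : ℕ → X → X → X) (Vi : ℕ → X → X → ℝ)
    (hmin : ∀ i x y z, Vi i x (πi i x y) ^ 2 + Vi i (πi i x y) y ^ 2 ≤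
      Vi i x z ^ 2 + Vi i z y ^ 2)
    (hrec : ∀ i x y, Vi (i + 1) x y = Vi i x (πi i x y) + Vi i (πi i x y) y)
    (hV0_nonneg : ∀ x y, 0 ≤ Vi 0 x y)
    (V : X → X → ℝ)
    (hV_lim : ∀ x y, Tendsto (fun i => Vi i x y) atTop (nhds (V x y)))
    (ε δ : ℝ) (hε : 0 < ε) (hδ : 0 < δ)
    (h0 : ∀ x y, d x y < δ → Vi 0 x y ≤ (1 + ε) * d x y) :
    ∀ x y, d x y < δ → V x y ≤ (1 + ε) * d x y := by
  have hnn : ∀ i x y, 0 ≤ Vi i x y := by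
    intro i
    induction i with
    | zero => exact hV0_nonneg
    | succ i ih =>
      intro x y
      rw [hrec]
      exact add_nonneg (ih _ _) (ih _ _)
  have key : ∀ i x y, d x y < δ → Vi i x y ≤ (1 + ε) * d x y := by
    intro i
    induction i with
    | zero => exact h0
    | succ i ih =>
      intro x y hxy
      obtain ⟨m, hm1, hm2⟩ := hmid x y
      have hd2 : d x y / 2 < δ := by
        have := hd_nonneg x y; linarith
      have h1 : Vi i x m ≤ (1 + ε) * (d x y / 2) := by
        have := ih x m (by rw [hm1]; exact hd2); rw [hm1] at this; exact this
      have h2 : Vi i m y ≤ (1 + ε) * (d x y / 2) := by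
        have := ih m y (by rw [hm2]; exact hd2); rw [hm2] at this; exact this
      have hm := hmin i x y m
      rw [hrec]
      set a := Vi i x (πi i x y) with ha'
      set b := Vi i (πi i x y) y with hb'
      have ha := hnn i x (πi i x y)
      have hb := hnn i (πi i x y) y
      have h1' := hnn i x m
      have h2' := hnn i m y
      have hdnn := hd_nonneg x y
      nlinarith [sq_nonneg (a - b), sq_nonneg (a + b - (1 + ε) * d x y),
        sq_nonneg (Vi i x m - Vi i m y)]
  intro x y hxy
  exact le_of_tendsto (hV_lim x y) (Eventually.of_forall fun i => key i x y hxy)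
end

section
/- Let (X,d_X) be a pseudo-quasi-metric space that is compact with respect to the topology induced by d_X, and let (Y,d_Y) be a weakly symmetric pseudo-quasi-metric space with its induced topology. If f : X → Y is continuous, then f is uniformly continuous: for every ε > 0 there exists δ > 0 such that d_Y(f(x),f(y)) < ε for all x,y ∈ X with d_X(x,y) < δ. -/
open Filter

/-- The topology induced by a pseudo-quasi-metric `d`, with the open balls as a base. -/
def inducedTop {X : Type*} (d : X → X → ℝ) : TopologicalSpace X :=
  TopologicalSpace.generateFrom {s | ∃ x r, 0 < r ∧ s = {y | d x y < r}}

private theorem pqm_open_ball_sub {X : Type*} {d : X → X → ℝ}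
    (htri : ∀ x y z, d x z ≤ d x y + d y z) :
    ∀ u, TopologicalSpace.GenerateOpen {s | ∃ x r, 0 < r ∧ s = {y | d x y < r}} u →
      ∀ x ∈ u, ∃ r > 0, {y | d x y < r} ⊆ u := by
  intro u hu
  induction hu with
  | basic s hs =>
    rintro x hx
    obtain ⟨a, r, hr, rfl⟩ := hs
    refine ⟨r - d a x, by simpa using hx, fun y hy => ?_⟩
    have := htri a x y
    simp only [Set.mem_setOf_eq] at hy ⊢
    linarith
  | univ => exact fun x _ => ⟨1, one_pos, fun _ _ => trivial⟩
  | inter s t _ _ ihs iht =>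
    intro x hx
    obtain ⟨r1, hr1, h1⟩ := ihs x hx.1
    obtain ⟨r2, hr2, h2⟩ := iht x hx.2
    refine ⟨min r1 r2, lt_min hr1 hr2, fun y hy => ?_⟩
    have hy' : d x y < min r1 r2 := hy
    have m1 : y ∈ {y | d x y < r1} := lt_of_lt_of_le hy' (min_le_left _ _)
    have m2 : y ∈ {y | d x y < r2} := lt_of_lt_of_le hy' (min_le_right _ _)
    exact ⟨h1 m1, h2 m2⟩
  | sUnion S _ ih =>
    intro x hx
    obtain ⟨s, hsS, hxs⟩ := hx
    obtain ⟨r, hr, h⟩ := ih s hsS x hxs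
    exact ⟨r, hr, fun y hy => ⟨s, hsS, h hy⟩⟩

private theorem pqm_nhds_basis {X : Type*} (d : X → X → ℝ)
    (hrefl : ∀ x, d x x = 0)
    (htri : ∀ x y z, d x z ≤ d x y + d y z) (x : X) :
    (@nhds X (inducedTop d) x).HasBasis (fun r : ℝ => 0 < r) (fun r => {y | d x y < r}) := by
  letI := inducedTop d
  constructor
  intro s
  constructor
  · intro hs
    obtain ⟨u, hus, hu, hxu⟩ := mem_nhds_iff.1 hs
    obtain ⟨r, hr, hsub⟩ := pqm_open_ball_sub htri u hu x hxu
    exact ⟨r, hr, hsub.trans hus⟩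
  · rintro ⟨r, hr, hsub⟩
    refine mem_nhds_iff.2 ⟨{y | d x y < r}, hsub, ?_, ?_⟩
    · exact TopologicalSpace.isOpen_generateFrom_of_mem ⟨x, r, hr, rfl⟩
    · simpa [hrefl x] using hr

private theorem tendsto_zero_of_ev {f : ℕ → ℝ} (h0 : ∀ n, 0 ≤ f n)
    (h : ∀ ε > (0:ℝ), ∀ᶠ n in atTop, f n < ε) : Tendsto f atTop (nhds 0) := by
  rw [tendsto_order]
  exact ⟨fun b hb => Eventually.of_forall fun n => lt_of_lt_of_le hb (h0 n),
    fun b hb => h b hb⟩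

/-- Lemma 2: a continuous map from a compact pseudo-quasi-metric space to a weakly symmetric
pseudo-quasi-metric space is uniformly continuous. -/
theorem continuous_to_uniformly_continuous {X Y : Type*}
    (dX : X → X → ℝ) (dY : Y → Y → ℝ)
    (hdX_refl : ∀ x, dX x x = 0)
    (hdX_nonneg : ∀ x y, 0 ≤ dX x y)
    (hdX_tri : ∀ x y z, dX x z ≤ dX x y + dX y z)
    (hdY_refl : ∀ x, dY x x = 0)
    (hdY_nonneg : ∀ x y, 0 ≤ dY x y)
    (hdY_tri : ∀ x y z, dY x z ≤ dY x y + dY y z)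
    (hcomp : @CompactSpace X (inducedTop dX))
    (hws : ∀ (x : Y) (y : ℕ → Y), Tendsto (fun i => dY x (y i)) atTop (nhds 0) →
      Tendsto (fun i => dY (y i) x) atTop (nhds 0))
    (f : X → Y)
    (hf : @Continuous X Y (inducedTop dX) (inducedTop dY) f) :
    ∀ ε > (0 : ℝ), ∃ δ > (0 : ℝ), ∀ x y, dX x y < δ → dY (f x) (f y) < ε := by
  letI tX := inducedTop dX
  letI tY := inducedTop dY
  by_contra hcon
  push_neg at hcon
  obtain ⟨ε, hε, hεbad⟩ := hcon
  -- choose bad pairs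
  have hpick : ∀ n : ℕ, ∃ x y : X, dX x y < 1 / (n + 1) ∧ ε ≤ dY (f x) (f y) := by
    intro n
    have hpos : (0:ℝ) < 1 / (n + 1) := by positivity
    obtain ⟨x, y, hxy, hbad⟩ := hεbad (1 / (n + 1)) hpos
    exact ⟨x, y, hxy, hbad⟩
  choose x y hxy hbad using hpick
  -- cluster point of x
  have hne : Nonempty X := ⟨x 0⟩
  obtain ⟨a, ha⟩ := exists_clusterPt_of_compactSpace (map x atTop)
  have hfreq : ∀ r > (0:ℝ), ∀ N : ℕ, ∃ n, N ≤ n ∧ dX a (x n) < r := by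
    intro r hr N
    have hU : {z | dX a z < r} ∈ nhds a := (pqm_nhds_basis dX hdX_refl hdX_tri a).mem_of_mem hr
    have := (mapClusterPt_iff_frequently.1 ha) _ hU
    obtain ⟨n, hn, hmem⟩ := (this.and_eventually (eventually_ge_atTop N)).exists
    exact ⟨n, hmem, hn⟩
  have key : ∀ k N : ℕ, ∃ n, N ≤ n ∧ dX a (x n) < 1 / (k + 1) :=
    fun k N => hfreq (1 / (k + 1)) (by positivity) N
  choose g hg1 hg2 using key
  set φ : ℕ → ℕ := fun k => Nat.rec (g 0 0) (fun k ih => g (k + 1) (ih + 1)) k with hφ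
  have hφmono : ∀ k, k ≤ φ k := by
    intro k
    induction k with
    | zero => exact Nat.zero_le _
    | succ k ih =>
      have : φ k + 1 ≤ φ (k + 1) := hg1 (k + 1) (φ k + 1)
      omega
  have hφd : ∀ k, dX a (x (φ k)) < 1 / (k + 1) := by
    intro k
    cases k with
    | zero => exact hg2 0 0
    | succ k => exact hg2 (k + 1) (φ k + 1)
  -- the three real sequences tend to 0
  have hinv : Tendsto (fun k : ℕ => 1 / ((k : ℝ) + 1)) atTop (nhds 0) :=
    tendsto_one_div_add_atTop_nhds_zero_nat
  have h1 : Tendsto (fun k => dX a (x (φ k))) atTop (nhds 0) :=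
    squeeze_zero (fun k => hdX_nonneg _ _) (fun k => le_of_lt (hφd k)) hinv
  have h2 : Tendsto (fun k => dX (x (φ k)) (y (φ k))) atTop (nhds 0) := by
    refine squeeze_zero (fun k => hdX_nonneg _ _) (fun k => ?_) hinv
    have := hxy (φ k)
    have hck : (k : ℝ) ≤ (φ k : ℝ) := Nat.cast_le.2 (hφmono k)
    have hle : 1 / ((φ k : ℝ) + 1) ≤ 1 / ((k : ℝ) + 1) :=
      one_div_le_one_div_of_le (by positivity) (by linarith)
    linarith
  have h3 : Tendsto (fun k => dX a (y (φ k))) atTop (nhds 0) := by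
    refine squeeze_zero (fun k => hdX_nonneg _ _) (fun k => hdX_tri a (x (φ k)) (y (φ k)))
      ?_
    simpa using h1.add h2
  -- continuity at a in epsilon-delta form
  have hcont : ∀ ε' > (0:ℝ), ∃ δ > (0:ℝ), ∀ z, dX a z < δ → dY (f a) (f z) < ε' := by
    intro ε' hε'
    have hta : Tendsto f (nhds a) (nhds (f a)) := hf.continuousAt.tendsto
    have := ((pqm_nhds_basis dX hdX_refl hdX_tri a).tendsto_iff
      (pqm_nhds_basis dY hdY_refl hdY_tri (f a))).1 hta ε' hε'
    obtain ⟨δ, hδ, hδ'⟩ := this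
    exact ⟨δ, hδ, fun z hz => hδ' z hz⟩
  have hmap : ∀ z : ℕ → X, Tendsto (fun k => dX a (z k)) atTop (nhds 0) →
      Tendsto (fun k => dY (f a) (f (z k))) atTop (nhds 0) := by
    intro z hz
    refine tendsto_zero_of_ev (fun k => hdY_nonneg _ _) fun ε' hε' => ?_
    obtain ⟨δ, hδ, hδ'⟩ := hcont ε' hε'
    have := (tendsto_order.1 hz).2 δ hδ
    exact this.mono fun k hk => hδ' _ hk
  have h4 : Tendsto (fun k => dY (f a) (f (x (φ k)))) atTop (nhds 0) := hmap _ h1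
  have h5 : Tendsto (fun k => dY (f a) (f (y (φ k)))) atTop (nhds 0) := hmap _ h3
  have h6 : Tendsto (fun k => dY (f (x (φ k))) (f a)) atTop (nhds 0) :=
    hws (f a) (fun k => f (x (φ k))) h4
  have h7 : Tendsto (fun k => dY (f (x (φ k))) (f (y (φ k)))) atTop (nhds 0) := by
    refine squeeze_zero (fun k => hdY_nonneg _ _)
      (fun k => hdY_tri (f (x (φ k))) (f a) (f (y (φ k)))) ?_
    simpa using h6.add h5
  have := ((tendsto_order.1 h7).2 ε hε).exists
  obtain ⟨k, hk⟩ := this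
  exact absurd (hbad (φ k)) (not_le.2 hk)
end

section
/- Let (X,d) be a weakly symmetric pseudo-quasi-metric space with the midpoint property that is compact with respect to the topology induced by d. Let C : X × X → ℝ be continuous and satisfy Assumption 1 with respect to d. Let π_i : X × X → X and V_i : X × X → ℝ (i ∈ ℕ) satisfy V_0 = C and, for all i and all x,y,z ∈ X: V_i(x,π_i(x,y))² + V_i(π_i(x,y),y)² ≤ V_i(x,z)² + V_i(z,y)², and V_{i+1}(x,y) = V_i(x,π_i(x,y)) + V_i(π_i(x,y),y). Assume the family (V_i)_i is equicontinuous. If π : X × X → X and V : X × X → ℝ are continuous functions (with respect to the induced topologies) such that d(π(x,y),π_i(x,y)) → 0 and V_i(x,y) → V(x,y) as i → ∞ for all x,y ∈ X, then V(x,y) = d(x,y) for all x,y ∈ X and π(x,y) is a midpoint between x and y for all x,y ∈ X. -/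
open Filter

set_option maxHeartbeats 4000000 in
/-- Proposition 2: if the actor-critic iteration converges to continuous limits `π` and `V`
on a compact weakly symmetric pseudo-quasi-metric space with the midpoint property, starting from
a function `C` satisfying Assumption 1, then `V` is the distance and `π` predicts midpoints. -/
theorem iteration_limit_is_exact {X : Type*}
    (d : X → X → ℝ)
    (hd_refl : ∀ x, d x x = 0)
    (hd_nonneg : ∀ x y, 0 ≤ d x y)
    (hd_tri : ∀ x y z, d x z ≤ d x y + d y z)
    (hws : ∀ (x : X) (y : ℕ → X), Tendsto (fun i => d x (y i)) atTop (nhds 0) →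
      Tendsto (fun i => d (y i) x) atTop (nhds 0))
    (hcomp : @CompactSpace X (inducedTop d))
    (hmid : ∀ x y, ∃ z, d x z = d x y / 2 ∧ d z y = d x y / 2)
    (C : X → X → ℝ)
    (hC_cont : @Continuous (X × X) ℝ
      (@instTopologicalSpaceProd X X (inducedTop d) (inducedTop d)) _
      (fun p => C p.1 p.2))
    (hC1 : ∀ (x : X) (y : ℕ → X), Tendsto (fun i => C x (y i)) atTop (nhds 0) →
      Tendsto (fun i => d x (y i)) atTop (nhds 0))
    (hC2 : ∀ (x : X), ∀ ε > (0 : ℝ), ∃ δ > (0 : ℝ), ∀ y z, d x y < δ → d x z < δ →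
      (1 - ε) * d y z ≤ C y z ∧ C y z ≤ (1 + ε) * d y z)
    (πi : ℕ → X → X → X) (Vi : ℕ → X → X → ℝ)
    (hV0 : ∀ x y, Vi 0 x y = C x y)
    (hmin : ∀ i x y z, Vi i x (πi i x y) ^ 2 + Vi i (πi i x y) y ^ 2 ≤
      Vi i x z ^ 2 + Vi i z y ^ 2)
    (hrec : ∀ i x y, Vi (i + 1) x y = Vi i x (πi i x y) + Vi i (πi i x y) y)
    (hequi : ∀ x y, ∀ ε > (0 : ℝ), ∃ δ > (0 : ℝ), ∀ i x' y',
      d x x' < δ → d y y' < δ → |Vi i x y - Vi i x' y'| < ε)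
    (π : X → X → X) (V : X → X → ℝ)
    (hπ_cont : @Continuous (X × X) X
      (@instTopologicalSpaceProd X X (inducedTop d) (inducedTop d)) (inducedTop d)
      (fun p => π p.1 p.2))
    (hV_cont : @Continuous (X × X) ℝ
      (@instTopologicalSpaceProd X X (inducedTop d) (inducedTop d)) _
      (fun p => V p.1 p.2))
    (hπ_lim : ∀ x y, Tendsto (fun i => d (π x y) (πi i x y)) atTop (nhds 0))
    (hV_lim : ∀ x y, Tendsto (fun i => Vi i x y) atTop (nhds (V x y))) :
    (∀ x y, V x y = d x y) ∧
    (∀ x y, d x (π x y) = d x y / 2 ∧ d (π x y) y = d x y / 2) := by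
  classical
  rcases isEmpty_or_nonempty X with hX | hX
  · exact ⟨fun x => (hX.false x).elim, fun x => (hX.false x).elim⟩
  letI : TopologicalSpace X := inducedTop d
  haveI : CompactSpace X := hcomp
  -- null distance is symmetric
  have hnull : ∀ a w : X, d a w = 0 → d w a = 0 := by
    intro a w h
    have h1 : Tendsto (fun _ : ℕ => d a w) atTop (nhds 0) := by
      rw [h]; exact tendsto_const_nhds
    have h2 := hws a (fun _ => w) h1
    exact tendsto_nhds_unique tendsto_const_nhds h2
  -- quantitative weak symmetry
  have hws' : ∀ a : X, ∀ ε > (0:ℝ), ∃ δ > (0:ℝ), ∀ w, d a w < δ → d w a < ε := by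
    intro a ε hε
    by_contra hcon
    push_neg at hcon
    have hcon' : ∀ δ : ℝ, 0 < δ → ∃ w, d a w < δ ∧ ε ≤ d w a := hcon
    choose w hw1 hw2 using fun n : ℕ => hcon' (1/(n+1)) (by positivity)
    have hlim : Tendsto (fun n => d a (w n)) atTop (nhds 0) := by
      have h0 : Tendsto (fun n : ℕ => 1/((n:ℝ)+1)) atTop (nhds 0) :=
        tendsto_one_div_add_atTop_nhds_zero_nat
      exact squeeze_zero (fun n => hd_nonneg _ _) (fun n => (hw1 n).le) h0
    have := hws a w hlim
    have hev : ∀ᶠ n in atTop, d (w n) a < ε :=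
      this.eventually (eventually_lt_nhds hε)
    rcases hev.exists with ⟨n, hn⟩
    exact absurd (hw2 n) (not_le.mpr hn)
  -- balls are open
  have isOpen_ball : ∀ (x : X) (r : ℝ), 0 < r → IsOpen {y | d x y < r} := by
    intro x r hr
    exact TopologicalSpace.GenerateOpen.basic _ ⟨x, r, hr, rfl⟩
  -- neighborhood basis
  have hnh : ∀ (x : X) (s : Set X), s ∈ nhds x ↔ ∃ ε > (0:ℝ), ∀ y, d x y < ε → y ∈ s := by
    intro x s
    constructor
    · intro hs
      rcases mem_nhds_iff.mp hs with ⟨t, hts, hto, hxt⟩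
      have key : ∀ t : Set X, TopologicalSpace.GenerateOpen
          {s | ∃ x r, 0 < r ∧ s = {y | d x y < r}} t → ∀ x ∈ t,
          ∃ ε > (0:ℝ), ∀ y, d x y < ε → y ∈ t := by
        intro t ht
        induction ht with
        | basic s hs =>
          rcases hs with ⟨z, r, hr, rfl⟩
          intro x hx
          refine ⟨r - d z x, by simpa using hx, fun y hy => ?_⟩
          have := hd_tri z x y
          simp only [Set.mem_setOf_eq] at *
          linarith
        | univ => exact fun x _ => ⟨1, by norm_num, fun y _ => trivial⟩
        | inter s t _ _ ihs iht =>
          intro x hx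
          rcases ihs x hx.1 with ⟨ε1, hε1, h1⟩
          rcases iht x hx.2 with ⟨ε2, hε2, h2⟩
          exact ⟨min ε1 ε2, lt_min hε1 hε2,
            fun y hy => ⟨h1 y (lt_of_lt_of_le hy (min_le_left _ _)),
              h2 y (lt_of_lt_of_le hy (min_le_right _ _))⟩⟩
        | sUnion S _ ih =>
          intro x hx
          rcases hx with ⟨s, hsS, hxs⟩
          rcases ih s hsS x hxs with ⟨ε, hε, h⟩
          exact ⟨ε, hε, fun y hy => ⟨s, hsS, h y hy⟩⟩
      rcases key t hto x hxt with ⟨ε, hε, h⟩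
      exact ⟨ε, hε, fun y hy => hts (h y hy)⟩
    · rintro ⟨ε, hε, h⟩
      exact mem_nhds_iff.mpr ⟨{y | d x y < ε}, h, isOpen_ball x ε hε,
        by simpa [hd_refl] using hε⟩
  -- epsilon-delta continuity of d
  have contd : ∀ a b : X, ∀ ε > (0:ℝ), ∃ δ > (0:ℝ), ∀ a' b',
      d a a' < δ → d b b' < δ → |d a' b' - d a b| < ε := by
    intro a b ε hε
    obtain ⟨δ1, hδ1, h1⟩ := hws' a (ε/3) (by linarith)
    obtain ⟨δ2, hδ2, h2⟩ := hws' b (ε/3) (by linarith)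
    refine ⟨min (min δ1 δ2) (ε/3), by positivity, ?_⟩
    intro a' b' ha hb
    have ha1 : d a a' < δ1 := lt_of_lt_of_le ha (le_trans (min_le_left _ _) (min_le_left _ _))
    have hb2 : d b b' < δ2 := lt_of_lt_of_le hb (le_trans (min_le_left _ _) (min_le_right _ _))
    have ha3 : d a a' < ε/3 := lt_of_lt_of_le ha (min_le_right _ _)
    have hb3 : d b b' < ε/3 := lt_of_lt_of_le hb (min_le_right _ _)
    have ha1' : d a' a < ε/3 := h1 a' ha1
    have hb2' : d b' b < ε/3 := h2 b' hb2
    have t1 : d a' b' ≤ d a' a + d a b + d b b' := by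
      calc d a' b' ≤ d a' a + d a b' := hd_tri _ _ _
        _ ≤ d a' a + (d a b + d b b') := by linarith [hd_tri a b b']
        _ = d a' a + d a b + d b b' := by ring
    have t2 : d a b ≤ d a a' + d a' b' + d b' b := by
      calc d a b ≤ d a a' + d a' b := hd_tri _ _ _
        _ ≤ d a a' + (d a' b' + d b' b) := by linarith [hd_tri a' b' b]
        _ = d a a' + d a' b' + d b' b := by ring
    rw [abs_sub_lt_iff]
    constructor <;> linarith
  -- d is continuous
  have ballmem : ∀ (x : X) (r : ℝ), 0 < r → {y | d x y < r} ∈ nhds x := by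
    intro x r hr
    exact (hnh x _).mpr ⟨r, hr, fun y hy => hy⟩
  have contD : Continuous (fun p : X × X => d p.1 p.2) := by
    rw [continuous_iff_continuousAt]
    rintro ⟨a, b⟩
    have : Tendsto (fun p : X × X => d p.1 p.2) (nhds (a, b)) (nhds (d a b)) := by
      rw [Metric.tendsto_nhds]
      intro ε hε
      obtain ⟨δ, hδ, h⟩ := contd a b ε hε
      have hmem : {p : X × X | d a p.1 < δ ∧ d b p.2 < δ} ∈ nhds (a, b) := by
        rw [mem_nhds_prod_iff]
        exact ⟨{y | d a y < δ}, ballmem a δ hδ, {y | d b y < δ}, ballmem b δ hδ,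
          fun p hp => ⟨hp.1, hp.2⟩⟩
      exact Filter.eventually_of_mem hmem (fun p hp => by
        rw [Real.dist_eq]; exact h p.1 p.2 hp.1 hp.2)
    exact this
  -- uniform local comparability of C with d
  have lemA : ∀ ε : ℝ, 0 < ε → ∃ δ > (0:ℝ), ∀ u v, d u v < δ →
      (1 - ε) * d u v ≤ C u v ∧ C u v ≤ (1 + ε) * d u v := by
    intro ε hε
    choose δf hδf hf using fun x => hC2 x ε hε
    obtain ⟨t, ht⟩ := isCompact_univ.elim_finite_subcover
      (fun x : X => {y | d x y < δf x / 2})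
      (fun x => isOpen_ball _ _ (half_pos (hδf x)))
      (fun y _ => Set.mem_iUnion.mpr ⟨y, by
        simp only [Set.mem_setOf_eq, hd_refl]; exact half_pos (hδf y)⟩)
    obtain ⟨x0⟩ := hX
    have hx0 := ht (Set.mem_univ x0)
    rw [Set.mem_iUnion₂] at hx0
    obtain ⟨x1, hx1t, _⟩ := hx0
    have htne : t.Nonempty := ⟨x1, hx1t⟩
    refine ⟨t.inf' htne (fun x => δf x / 2), ?_, ?_⟩
    · rw [gt_iff_lt, Finset.lt_inf'_iff]
      intro i _
      exact half_pos (hδf i)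
    · intro u v huv
      have hu := ht (Set.mem_univ u)
      rw [Set.mem_iUnion₂] at hu
      obtain ⟨x, hxt, hx⟩ := hu
      simp only [Set.mem_setOf_eq] at hx
      have hδ0 : t.inf' htne (fun x => δf x / 2) ≤ δf x / 2 :=
        Finset.inf'_le (fun x => δf x / 2) hxt
      have h1 : d x u < δf x := by linarith [hδf x]
      have h2 : d x v < δf x := by
        have := hd_tri x u v
        linarith
      exact hf x u v h1 h2
  -- choose midpoints
  choose mid hm1 hm2 using hmid
  -- squared upper bound by induction
  have UBsq : ∀ (i : ℕ) (r B : ℝ), 0 ≤ B → (∀ a b, d a b ≤ r → (C a b)^2 ≤ B) →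
      ∀ x y, d x y ≤ 2^i * r → (Vi i x y)^2 ≤ 4^i * B := by
    intro i
    induction i with
    | zero =>
      intro r B hB h x y hd
      simpa [hV0] using h x y (by simpa using hd)
    | succ n ih =>
      intro r B hB h x y hd
      have hp2 : (2:ℝ)^(n+1) = 2 * 2^n := by ring
      have hm1' := hm1 x y
      have hm2' := hm2 x y
      have hxy0 := hd_nonneg x y
      have h1 : d x (mid x y) ≤ 2^n * r := by
        rw [hm1']
        rw [hp2] at hd
        linarith
      have h2 : d (mid x y) y ≤ 2^n * r := by
        rw [hm2']
        rw [hp2] at hd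
        linarith
      have e1 := ih r B hB h x (mid x y) h1
      have e2 := ih r B hB h (mid x y) y h2
      have hr := hrec n x y
      have hq := hmin n x y (mid x y)
      have hp4 : (4:ℝ)^(n+1) = 4 * 4^n := by ring
      rw [hr, hp4]
      nlinarith [sq_nonneg (Vi n x (πi n x y) - Vi n (πi n x y) y)]
  -- vanishing on null pairs
  have Vinull : ∀ (i : ℕ) (x y : X), d x y = 0 → Vi i x y = 0 := by
    obtain ⟨δA, hδA, hA⟩ := lemA (1/2) (by norm_num)
    have hCb : ∀ r, 0 < r → r < δA → ∀ a b, d a b ≤ r → (C a b)^2 ≤ ((3/2)*r)^2 := by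
      intro r hr hrδ a b hab
      have h := hA a b (lt_of_le_of_lt hab hrδ)
      have hd0 := hd_nonneg a b
      nlinarith
    intro i x y hd0
    have hb : ∀ r, 0 < r → r < δA → (Vi i x y)^2 ≤ 4^i * ((3/2)*r)^2 := by
      intro r hr hrδ
      exact UBsq i r _ (by positivity) (hCb r hr hrδ) x y (by rw [hd0]; positivity)
    have hsq : (Vi i x y)^2 ≤ 0 := by
      by_contra hpos
      push_neg at hpos
      set q := (Vi i x y)^2 with hq
      set K := (4:ℝ)^i * (3/2)^2 with hK
      have hKpos : 0 < K := by positivity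
      set r := min (δA/2) (Real.sqrt (q/(2*K))) with hrdef
      have hr : 0 < r := by
        apply lt_min (by linarith)
        exact Real.sqrt_pos.mpr (by positivity)
      have hrδ : r < δA := lt_of_le_of_lt (min_le_left _ _) (by linarith)
      have hb' := hb r hr hrδ
      have hr2 : r^2 ≤ q/(2*K) := by
        have h1 : r ≤ Real.sqrt (q/(2*K)) := min_le_right _ _
        have h2 : (0:ℝ) ≤ q/(2*K) := by positivity
        nlinarith [Real.sq_sqrt h2, Real.sqrt_nonneg (q/(2*K))]
      have hKr : (4:ℝ)^i * ((3/2)*r)^2 = K * r^2 := by rw [hK]; ring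
      rw [hKr] at hb'
      have heq : K * (q/(2*K)) = q/2 := by field_simp
      have : K * r^2 ≤ q/2 := by
        rw [← heq]
        exact mul_le_mul_of_nonneg_left hr2 hKpos.le
      linarith
    have hz : (Vi i x y)^2 = 0 := le_antisymm hsq (sq_nonneg _)
    exact (pow_eq_zero_iff (by norm_num : (2:ℕ) ≠ 0)).mp hz
  -- eventual upper bound |Vi| ≤ (1+ε) d
  have UB2 : ∀ ε : ℝ, 0 < ε → ε < 1 → ∀ x y : X,
      ∀ᶠ i in atTop, |Vi i x y| ≤ (1+ε) * d x y := by
    intro ε hε hε1 x y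
    obtain ⟨δA, hδA, hA⟩ := lemA ε hε
    have hCb : ∀ r, 0 < r → r < δA → ∀ a b, d a b ≤ r → (C a b)^2 ≤ ((1+ε)*r)^2 := by
      intro r hr hrδ a b hab
      have h := hA a b (lt_of_le_of_lt hab hrδ)
      have hd0 := hd_nonneg a b
      have hC0 : 0 ≤ C a b := le_trans (by nlinarith) h.1
      have hCle : C a b ≤ (1+ε)*r := le_trans h.2 (by nlinarith)
      nlinarith
    by_cases hd0 : d x y = 0
    · refine Filter.Eventually.of_forall (fun i => ?_)
      rw [Vinull i x y hd0, hd0]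
      simp
    · have hdpos : 0 < d x y := lt_of_le_of_ne (hd_nonneg x y) (Ne.symm hd0)
      obtain ⟨N, hN⟩ : ∃ N : ℕ, d x y / δA < 2^N :=
        pow_unbounded_of_one_lt _ (by norm_num)
      refine Filter.eventually_atTop.mpr ⟨N, fun i hi => ?_⟩
      have h2i : d x y / δA < 2^i :=
        lt_of_lt_of_le hN (pow_le_pow_right₀ (by norm_num) hi)
      have h2ipos : (0:ℝ) < 2^i := by positivity
      set r := d x y / 2^i with hrdef
      have hr : 0 < r := by positivity
      have hrδ : r < δA := by
        rw [hrdef, div_lt_iff₀ h2ipos]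
        rw [div_lt_iff₀ hδA] at h2i
        linarith [mul_comm δA ((2:ℝ)^i)]
      have hb := UBsq i r _ (by positivity) (hCb r hr hrδ) x y
        (le_of_eq (by rw [hrdef]; field_simp))
      have h4 : (4:ℝ)^i * ((1+ε)*r)^2 = ((1+ε) * d x y)^2 := by
        have h42 : (4:ℝ)^i = ((2:ℝ)^i)^2 := by
          rw [show (4:ℝ) = 2^2 by norm_num, ← pow_mul, ← pow_mul, mul_comm]
        rw [hrdef, h42]
        field_simp
      rw [h4] at hb
      have hBpos : 0 < (1+ε) * d x y := by positivity
      nlinarith [abs_nonneg (Vi i x y), sq_abs (Vi i x y)]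
  -- |V| ≤ d
  have Vabs : ∀ x y : X, |V x y| ≤ d x y := by
    intro x y
    have key : ∀ ε : ℝ, 0 < ε → ε < 1 → |V x y| ≤ (1+ε) * d x y := by
      intro ε h1 h2
      exact le_of_tendsto (hV_lim x y).abs (UB2 ε h1 h2 x y)
    by_contra hcon
    push_neg at hcon
    have hd0 := hd_nonneg x y
    set ε := min (1/2) ((|V x y| - d x y)/(2*(d x y + 1))) with hε
    have h1 : 0 < ε := by
      apply lt_min (by norm_num)
      have : 0 < |V x y| - d x y := by linarith
      positivity
    have h2 : ε < 1 := lt_of_le_of_lt (min_le_left _ _) (by norm_num)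
    have h3 := key ε h1 h2
    have h4 : ε ≤ (|V x y| - d x y)/(2*(d x y + 1)) := min_le_right _ _
    have h5 : ε * (2*(d x y + 1)) ≤ |V x y| - d x y := by
      rw [le_div_iff₀ (by positivity : (0:ℝ) < 2*(d x y + 1))] at h4
      exact h4
    nlinarith
  have Vle : ∀ x y : X, V x y ≤ d x y := fun x y => le_trans (le_abs_self _) (Vabs x y)
  have Vnull : ∀ x y : X, d x y = 0 → V x y = 0 := by
    intro x y h
    have : Tendsto (fun i => Vi i x y) atTop (nhds 0) := by
      have : (fun i => Vi i x y) = fun _ => (0:ℝ) := funext fun i => Vinull i x y h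
      rw [this]
      exact tendsto_const_nhds
    exact tendsto_nhds_unique (hV_lim x y) this
  -- limits of split values
  have lim1 : ∀ x y : X,
      Tendsto (fun i => Vi i x (πi i x y)) atTop (nhds (V x (π x y))) := by
    intro x y
    rw [Metric.tendsto_atTop]
    intro ε hε
    obtain ⟨δ, hδ, hδe⟩ := hequi x (π x y) (ε/2) (by linarith)
    have h1 : ∀ᶠ i in atTop, d (π x y) (πi i x y) < δ :=
      (hπ_lim x y).eventually (eventually_lt_nhds hδ)
    have h2 : ∀ᶠ i in atTop, |Vi i x (π x y) - V x (π x y)| < ε/2 := by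
      obtain ⟨N, hN⟩ := Metric.tendsto_atTop.mp (hV_lim x (π x y)) (ε/2) (by linarith)
      exact Filter.eventually_atTop.mpr ⟨N, fun i hi => by
        have := hN i hi; rwa [Real.dist_eq] at this⟩
    obtain ⟨N, hN⟩ := Filter.eventually_atTop.mp (h1.and h2)
    refine ⟨N, fun i hi => ?_⟩
    obtain ⟨ha, hb⟩ := hN i hi
    have he := hδe i x (πi i x y) (by rw [hd_refl]; exact hδ) ha
    have he' : |Vi i x (πi i x y) - Vi i x (π x y)| < ε/2 := by
      rwa [abs_sub_comm] at he
    rw [Real.dist_eq]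
    calc |Vi i x (πi i x y) - V x (π x y)|
        ≤ |Vi i x (πi i x y) - Vi i x (π x y)| + |Vi i x (π x y) - V x (π x y)| :=
          abs_sub_le _ _ _
      _ < ε := by linarith
  have lim2 : ∀ x y : X,
      Tendsto (fun i => Vi i (πi i x y) y) atTop (nhds (V (π x y) y)) := by
    intro x y
    rw [Metric.tendsto_atTop]
    intro ε hε
    obtain ⟨δ, hδ, hδe⟩ := hequi (π x y) y (ε/2) (by linarith)
    have h1 : ∀ᶠ i in atTop, d (π x y) (πi i x y) < δ :=
      (hπ_lim x y).eventually (eventually_lt_nhds hδ)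
    have h2 : ∀ᶠ i in atTop, |Vi i (π x y) y - V (π x y) y| < ε/2 := by
      obtain ⟨N, hN⟩ := Metric.tendsto_atTop.mp (hV_lim (π x y) y) (ε/2) (by linarith)
      exact Filter.eventually_atTop.mpr ⟨N, fun i hi => by
        have := hN i hi; rwa [Real.dist_eq] at this⟩
    obtain ⟨N, hN⟩ := Filter.eventually_atTop.mp (h1.and h2)
    refine ⟨N, fun i hi => ?_⟩
    obtain ⟨ha, hb⟩ := hN i hi
    have he := hδe i (πi i x y) y ha (by rw [hd_refl]; exact hδ)
    have he' : |Vi i (πi i x y) y - Vi i (π x y) y| < ε/2 := by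
      rwa [abs_sub_comm] at he
    rw [Real.dist_eq]
    calc |Vi i (πi i x y) y - V (π x y) y|
        ≤ |Vi i (πi i x y) y - Vi i (π x y) y| + |Vi i (π x y) y - V (π x y) y| :=
          abs_sub_le _ _ _
      _ < ε := by linarith
  -- the limit functional equations
  have F2 : ∀ x y : X, V x y = V x (π x y) + V (π x y) y := by
    intro x y
    have hL : Tendsto (fun i => Vi (i+1) x y) atTop (nhds (V x y)) :=
      (hV_lim x y).comp (tendsto_add_atTop_nat 1)
    have hR : Tendsto (fun i => Vi (i+1) x y) atTop
        (nhds (V x (π x y) + V (π x y) y)) := by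
      have heq : (fun i => Vi (i+1) x y)
          = fun i => Vi i x (πi i x y) + Vi i (πi i x y) y :=
        funext (fun i => hrec i x y)
      rw [heq]
      exact (lim1 x y).add (lim2 x y)
    exact tendsto_nhds_unique hL hR
  have F3 : ∀ x y z : X,
      (V x (π x y))^2 + (V (π x y) y)^2 ≤ (V x z)^2 + (V z y)^2 := by
    intro x y z
    have hL : Tendsto (fun i => (Vi i x (πi i x y))^2 + (Vi i (πi i x y) y)^2) atTop
        (nhds ((V x (π x y))^2 + (V (π x y) y)^2)) :=
      ((lim1 x y).pow 2).add ((lim2 x y).pow 2)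
    have hR : Tendsto (fun i => (Vi i x z)^2 + (Vi i z y)^2) atTop
        (nhds ((V x z)^2 + (V z y)^2)) :=
      ((hV_lim x z).pow 2).add ((hV_lim z y).pow 2)
    exact le_of_tendsto_of_tendsto' hL hR (fun i => hmin i x y z)
  -- continuity of w ↦ d a w
  have contda : ∀ a : X, Continuous (fun w : X => d a w) := by
    intro a
    exact contD.comp ((continuous_const.prodMk continuous_id :
      Continuous fun w : X => (a, w)))
  -- connected geodesic hulls
  have Mexists : ∀ u v : X, ∃ M : Set X, u ∈ M ∧ v ∈ M ∧
      (∀ w ∈ M, d u w ≤ d u v) ∧ IsPreconnected M := by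
    intro u v
    set D := d u v with hD
    have hD0 : 0 ≤ D := hd_nonneg u v
    set geo : ℕ → ℕ → X := fun n => Nat.rec (fun k => if k = 0 then u else v)
      (fun _ ih k => if k % 2 = 0 then ih (k/2) else mid (ih (k/2)) (ih (k/2+1))) n
      with hgeo
    have geo00 : geo 0 0 = u := rfl
    have geo01 : geo 0 1 = v := rfl
    have geoEven : ∀ n k, geo (n+1) (2*k) = geo n k := by
      intro n k
      show (if (2*k) % 2 = 0 then geo n ((2*k)/2)
        else mid (geo n ((2*k)/2)) (geo n ((2*k)/2+1))) = geo n k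
      rw [if_pos (by omega)]
      congr 1
      omega
    have geoOdd : ∀ n k, geo (n+1) (2*k+1) = mid (geo n k) (geo n (k+1)) := by
      intro n k
      show (if (2*k+1) % 2 = 0 then geo n ((2*k+1)/2)
        else mid (geo n ((2*k+1)/2)) (geo n ((2*k+1)/2+1))) = mid (geo n k) (geo n (k+1))
      rw [if_neg (by omega)]
      have e1 : (2*k+1)/2 = k := by omega
      rw [e1]
    have geoAdj : ∀ n k, k < 2^n → d (geo n k) (geo n (k+1)) = D / 2^n := by
      intro n
      induction n with
      | zero =>
        intro k hk
        have hk0 : k = 0 := by omega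
        subst hk0
        rw [geo00, geo01]
        simp [hD]
      | succ n ih =>
        intro k hk
        have h2 : 2^(n+1) = 2 * 2^n := by rw [pow_succ]; ring
        rcases Nat.even_or_odd k with ⟨j, hj⟩ | ⟨j, hj⟩
        · have hkj : k = 2*j := by omega
          have hj2 : j < 2^n := by omega
          subst hkj
          have e1 : 2*j + 1 = 2*j + 1 := rfl
          rw [geoEven n j, geoOdd n j, hm1 (geo n j) (geo n (j+1)), ih j hj2]
          rw [show ((2:ℝ)^(n+1)) = 2 * 2^n by ring]
          ring
        · have hkj : k = 2*j+1 := by omega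
          have hj2 : j < 2^n := by omega
          subst hkj
          have e2 : 2*j+1+1 = 2*(j+1) := by omega
          rw [geoOdd n j, e2, geoEven n (j+1), hm2 (geo n j) (geo n (j+1)), ih j hj2]
          rw [show ((2:ℝ)^(n+1)) = 2 * 2^n by ring]
          ring
    have geoZero : ∀ n, geo n 0 = u := by
      intro n
      induction n with
      | zero => exact geo00
      | succ n ih =>
        have := geoEven n 0
        simpa [ih] using this
    have geoBound : ∀ n k, k ≤ 2^n → d u (geo n k) ≤ (k:ℝ) * (D/2^n) := by
      intro n k
      induction k with
      | zero =>
        intro _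
        rw [geoZero n, hd_refl]
        simp
      | succ k ihk =>
        intro hk
        have hk' : k ≤ 2^n := by omega
        have htri := hd_tri u (geo n k) (geo n (k+1))
        have hadj := geoAdj n k (by omega)
        have hb := ihk hk'
        push_cast
        rw [hadj] at htri
        push_cast at hb
        linarith
    set S0 : Set X := {w | ∃ n k, k ≤ 2^n ∧ geo n k = w} with hS0def
    set M := closure S0 with hM
    have hS0M : S0 ⊆ M := subset_closure
    have huM : u ∈ M := hS0M ⟨0, 0, by norm_num, geo00⟩
    have hvM : v ∈ M := hS0M ⟨0, 1, by norm_num, geo01⟩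
    have hMbound : ∀ w ∈ M, d u w ≤ D := by
      have hsub : S0 ⊆ {w | d u w ≤ D} := by
        rintro w ⟨n, k, hk, rfl⟩
        have h1 := geoBound n k hk
        have h2 : (k:ℝ) * (D/2^n) ≤ D := by
          have hkr : (k:ℝ) ≤ 2^n := by exact_mod_cast hk
          have hpos : (0:ℝ) < 2^n := by positivity
          calc (k:ℝ) * (D/2^n) ≤ 2^n * (D/2^n) := by
                apply mul_le_mul_of_nonneg_right hkr
                positivity
            _ = D := by field_simp
        exact le_trans h1 h2
      have hcl : IsClosed {w | d u w ≤ D} := isClosed_le (contda u) continuous_const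
      exact fun w hw => closure_minimal hsub hcl hw
    refine ⟨M, huM, hvM, hMbound, ?_⟩
    -- preconnectedness
    intro Uo Vo hUo hVo hcov ⟨p, hpM, hpU⟩ ⟨q, hqM, hqV⟩
    by_contra hne
    rw [Set.not_nonempty_iff_eq_empty] at hne
    have hnem : ∀ w, w ∈ M → w ∈ Uo → w ∈ Vo → False := by
      intro w h1 h2 h3
      have : w ∈ M ∩ (Uo ∩ Vo) := ⟨h1, h2, h3⟩
      rw [hne] at this
      exact this
    set A := M ∩ Uo with hAdef
    set B := M ∩ Vo with hBdef
    have hABdisj : ∀ w, w ∈ A → w ∈ B → False :=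
      fun w hwA hwB => hnem w hwA.1 hwA.2 hwB.2
    have hAcl : IsClosed A := by
      have : A = M \ Vo := by
        apply Set.eq_of_subset_of_subset
        · rintro w ⟨hwM, hwU⟩
          exact ⟨hwM, fun hwV => hnem w hwM hwU hwV⟩
        · rintro w ⟨hwM, hwV⟩
          rcases hcov hwM with h | h
          · exact ⟨hwM, h⟩
          · exact absurd h hwV
      rw [this]
      exact isClosed_closure.sdiff hVo
    have hBcl : IsClosed B := by
      have : B = M \ Uo := by
        apply Set.eq_of_subset_of_subset
        · rintro w ⟨hwM, hwV⟩
          exact ⟨hwM, fun hwU => hnem w hwM hwU hwV⟩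
        · rintro w ⟨hwM, hwU⟩
          rcases hcov hwM with h | h
          · exact absurd h hwU
          · exact ⟨hwM, h⟩
      rw [this]
      exact isClosed_closure.sdiff hUo
    have hAuB : ∀ w ∈ M, w ∈ A ∨ w ∈ B := by
      intro w hw
      rcases hcov hw with h | h
      · exact Or.inl ⟨hw, h⟩
      · exact Or.inr ⟨hw, h⟩
    have hAopen : ∀ b ∈ A, ∃ r > (0:ℝ), ∀ w, d b w < r → w ∈ M → w ∈ A := by
      intro b hb
      obtain ⟨r, hr, h⟩ := (hnh b Uo).mp (hUo.mem_nhds hb.2)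
      exact ⟨r, hr, fun w hw hwM => ⟨hwM, h w hw⟩⟩
    have hBopen : ∀ b ∈ B, ∃ r > (0:ℝ), ∀ w, d b w < r → w ∈ M → w ∈ B := by
      intro b hb
      obtain ⟨r, hr, h⟩ := (hnh b Vo).mp (hVo.mem_nhds hb.2)
      exact ⟨r, hr, fun w hw hwM => ⟨hwM, h w hw⟩⟩
    -- generic two-sided separation argument
    have key : ∀ A' B' : Set X, IsClosed A' → IsClosed B' →
        (∀ w ∈ M, w ∈ A' ∨ w ∈ B') → (∀ w, w ∈ A' → w ∈ B' → False) →
        A' ⊆ M → B' ⊆ M →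
        u ∈ A' → B'.Nonempty →
        (∀ b ∈ B', ∃ r > (0:ℝ), ∀ w, d b w < r → w ∈ M → w ∈ B') → False := by
      intro A' B' hAcl' hBcl' hAuB' hdisj' hAM hBM huA hBne hBop
      set K := (A' ×ˢ B') ∪ (B' ×ˢ A') with hKdef
      have hKc : IsCompact K :=
        (hAcl'.isCompact.prod hBcl'.isCompact).union
          (hBcl'.isCompact.prod hAcl'.isCompact)
      obtain ⟨b0, hb0⟩ := hBne
      have hKne : K.Nonempty := ⟨(u, b0), Or.inl ⟨huA, hb0⟩⟩
      obtain ⟨z, hzK, hzmin⟩ := hKc.exists_isMinOn hKne contD.continuousOn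
      set μ := d z.1 z.2 with hμdef
      have hμpos : 0 < μ := by
        rcases eq_or_lt_of_le (hd_nonneg z.1 z.2) with heq | hlt
        · exfalso
          rcases hzK with ⟨hz1, hz2⟩ | ⟨hz1, hz2⟩
          · obtain ⟨r, hr, hro⟩ := hBop z.2 hz2
            have h0 : d z.2 z.1 = 0 := hnull _ _ heq.symm
            have : z.1 ∈ B' := hro z.1 (by rw [h0]; exact hr) (hAM hz1)
            exact hdisj' z.1 hz1 this
          · obtain ⟨r, hr, hro⟩ := hBop z.1 hz1
            have : z.2 ∈ B' := hro z.2 (by rw [← heq]; exact hr) (hAM hz2)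
            exact hdisj' z.2 hz2 this
        · exact hlt
      have walk : ∀ m, D / 2^m < μ → ∀ k, k ≤ 2^m → geo m k ∈ A' := by
        intro m hm k
        induction k with
        | zero =>
          intro _
          rw [geoZero m]
          exact huA
        | succ k ih =>
          intro hk
          have hkA := ih (by omega)
          have hmem : geo m (k+1) ∈ M := hS0M ⟨m, k+1, hk, rfl⟩
          rcases hAuB' _ hmem with h | h
          · exact h
          · exfalso
            have hpair : (geo m k, geo m (k+1)) ∈ K := Or.inl ⟨hkA, h⟩
            have hle := hzmin hpair
            simp only [Set.mem_setOf_eq] at hle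
            have hadj := geoAdj m k (by omega)
            rw [hadj] at hle
            exact absurd hle (not_le.mpr hm)
      have lift : ∀ n j k, k ≤ 2^n → geo (n+j) (k * 2^j) = geo n k := by
        intro n j
        induction j with
        | zero => intro k _; simp
        | succ j ihj =>
          intro k hk
          have h1 : k * 2^(j+1) = 2 * (k * 2^j) := by ring
          have h2 : n + (j+1) = (n+j) + 1 := rfl
          rw [h2, h1, geoEven]
          exact ihj k hk
      have alldy : ∀ n k, k ≤ 2^n → geo n k ∈ A' := by
        intro n k hk
        obtain ⟨m0, hm0⟩ : ∃ m : ℕ, D/μ < 2^m :=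
          pow_unbounded_of_one_lt _ (by norm_num)
        have hstep : D / 2^(n+m0) < μ := by
          rw [div_lt_iff₀ hμpos] at hm0
          rw [div_lt_iff₀ (by positivity : (0:ℝ) < 2^(n+m0))]
          have hmono : (2:ℝ)^m0 ≤ 2^(n+m0) :=
            pow_le_pow_right₀ (by norm_num) (by omega)
          nlinarith
        have hw := walk (n+m0) hstep (k * 2^m0) (by
          calc k * 2^m0 ≤ 2^n * 2^m0 := Nat.mul_le_mul_right _ hk
            _ = 2^(n+m0) := (pow_add 2 n m0).symm)
        rwa [lift n m0 k hk] at hw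
      obtain ⟨r, hr, hro⟩ := hBop b0 hb0
      obtain ⟨s, hsb, hsS⟩ := mem_closure_iff.mp (hBM hb0) {w | d b0 w < r}
        (isOpen_ball b0 r hr) (by simpa [hd_refl] using hr)
      obtain ⟨n, k, hk, rfl⟩ := hsS
      exact hdisj' _ (alldy n k hk) (hro _ hsb (hS0M ⟨n, k, hk, rfl⟩))
    rcases hAuB u huM with huA | huB
    · exact key A B hAcl hBcl hAuB hABdisj (fun w hw => hw.1) (fun w hw => hw.1)
        huA ⟨q, hqM, hqV⟩ hBopen
    · exact key B A hBcl hAcl (fun w hw => (hAuB w hw).symm)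
        (fun w h1 h2 => hABdisj w h2 h1) (fun w hw => hw.1) (fun w hw => hw.1)
        huB ⟨p, hpM, hpU⟩ hAopen
  -- C vanishes only on null pairs
  have Czero : ∀ u w : X, C u w = 0 → d u w = 0 := by
    intro u w h
    have h1 : Tendsto (fun _ : ℕ => C u w) atTop (nhds 0) := by
      rw [h]; exact tendsto_const_nhds
    exact tendsto_nhds_unique tendsto_const_nhds (hC1 u (fun _ => w) h1)
  -- C is nonnegative
  have Cnonneg : ∀ u v : X, 0 ≤ C u v := by
    obtain ⟨δH, hδH, hH⟩ := lemA (1/2) (by norm_num)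
    intro u v
    by_contra hneg
    push_neg at hneg
    obtain ⟨M, huM, hvM, _, hMconn⟩ := Mexists u v
    have hContCu : Continuous (fun w => C u w) :=
      hC_cont.comp (continuous_const.prodMk continuous_id)
    set Uo := {w | d u w < δH} ∪ {w : X | 0 < C u w} with hUodef
    set No := {w : X | C u w < 0} with hNodef
    have hUoO : IsOpen Uo :=
      (isOpen_ball u δH hδH).union (isOpen_lt continuous_const hContCu)
    have hNoO : IsOpen No := isOpen_lt hContCu continuous_const
    have hcov : M ⊆ Uo ∪ No := by
      intro w _
      rcases lt_trichotomy (C u w) 0 with h | h | h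
      · exact Or.inr h
      · exact Or.inl (Or.inl (by
          show d u w < δH
          rw [Czero u w h]; exact hδH))
      · exact Or.inl (Or.inr h)
    have hne1 : (M ∩ Uo).Nonempty :=
      ⟨u, huM, Or.inl (by show d u u < δH; rw [hd_refl]; exact hδH)⟩
    have hne2 : (M ∩ No).Nonempty := ⟨v, hvM, hneg⟩
    obtain ⟨w, hwM, hwU, hwN⟩ := hMconn Uo No hUoO hNoO hcov hne1 hne2
    have hwN' : C u w < 0 := hwN
    rcases hwU with h | h
    · have hle := (hH u w h).1
      have := hd_nonneg u w
      nlinarith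
    · exact absurd hwN' (not_lt.mpr (le_of_lt h))
  -- the global lower bound, parameterized by ε
  have mainLB : ∀ ε : ℝ, 0 < ε → ε ≤ 1/10 → ∀ x y : X, (1-ε) * d x y ≤ V x y := by
    intro ε hε hε10
    have hε9 : (9:ℝ)/10 ≤ 1 - ε := by linarith
    obtain ⟨δA, hδA, hA⟩ := lemA ε hε
    -- uniform positive lower bound for C at scale δA
    obtain ⟨γ0, hγ0pos, hγ0⟩ : ∃ γ0 > (0:ℝ), ∀ u v : X, δA ≤ d u v → γ0 ≤ C u v := by
      set K := {p : X × X | δA ≤ d p.1 p.2} with hKdef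
      by_cases hKne : K.Nonempty
      · have hKcl : IsClosed K := isClosed_le continuous_const contD
        obtain ⟨z, hzK, hzmin⟩ := hKcl.isCompact.exists_isMinOn hKne hC_cont.continuousOn
        refine ⟨C z.1 z.2, ?_, fun u v h => hzmin (show ((u,v) : X × X) ∈ K from h)⟩
        rcases eq_or_lt_of_le (Cnonneg z.1 z.2) with heq | h
        · exfalso
          have := Czero z.1 z.2 heq.symm
          have hzd : δA ≤ d z.1 z.2 := hzK
          linarith
        · exact h
      · exact ⟨1, one_pos, fun u v h => absurd ⟨(u,v), h⟩ hKne⟩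
    -- lower bound for all iterates
    have LBi : ∀ (i : ℕ) (x y : X), min γ0 ((1-ε) * d x y) ≤ Vi i x y := by
      intro i
      induction i with
      | zero =>
        intro x y
        rw [hV0]
        by_cases h : d x y < δA
        · exact le_trans (min_le_right _ _) (hA x y h).1
        · exact le_trans (min_le_left _ _) (hγ0 x y (not_lt.mp h))
      | succ n ih =>
        intro x y
        rw [hrec]
        have h1 := ih x (πi n x y)
        have h2 := ih (πi n x y) y
        have htri := hd_tri x (πi n x y) y
        have hmm1 : (0:ℝ) ≤ min γ0 ((1-ε) * d x (πi n x y)) :=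
          le_min hγ0pos.le (mul_nonneg (by linarith) (hd_nonneg x (πi n x y)))
        have hmm2 : (0:ℝ) ≤ min γ0 ((1-ε) * d (πi n x y) y) :=
          le_min hγ0pos.le (mul_nonneg (by linarith) (hd_nonneg (πi n x y) y))
        rcases le_total γ0 ((1-ε) * d x (πi n x y)) with hc1 | hc1
        · calc min γ0 ((1-ε) * d x y) ≤ γ0 := min_le_left _ _
            _ ≤ Vi n x (πi n x y) + Vi n (πi n x y) y := by
              rw [← min_eq_left hc1]
              linarith
        · rcases le_total γ0 ((1-ε) * d (πi n x y) y) with hc2 | hc2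
          · calc min γ0 ((1-ε) * d x y) ≤ γ0 := min_le_left _ _
              _ ≤ Vi n x (πi n x y) + Vi n (πi n x y) y := by
                rw [← min_eq_left hc2]
                linarith
          · have e1 : min γ0 ((1-ε) * d x (πi n x y)) = (1-ε) * d x (πi n x y) :=
              min_eq_right hc1
            have e2 : min γ0 ((1-ε) * d (πi n x y) y) = (1-ε) * d (πi n x y) y :=
              min_eq_right hc2
            rw [e1] at h1
            rw [e2] at h2
            calc min γ0 ((1-ε) * d x y) ≤ (1-ε) * d x y := min_le_right _ _
              _ ≤ Vi n x (πi n x y) + Vi n (πi n x y) y := by nlinarith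
    have LBV : ∀ x y : X, min γ0 ((1-ε) * d x y) ≤ V x y := fun x y =>
      ge_of_tendsto (hV_lim x y) (Filter.Eventually.of_forall fun i => LBi i x y)
    have Vnonneg : ∀ x y : X, 0 ≤ V x y := by
      intro x y
      have h0 : (0:ℝ) ≤ (1-ε) * d x y := mul_nonneg (by linarith) (hd_nonneg x y)
      exact le_trans (le_min hγ0pos.le h0) (LBV x y)
    have Vzero : ∀ x y : X, V x y = 0 → d x y = 0 := by
      intro x y h
      have hlb := LBV x y
      rw [h] at hlb
      rcases le_total γ0 ((1-ε) * d x y) with hc | hc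
      · exfalso
        rw [min_eq_left hc] at hlb
        linarith
      · rw [min_eq_right hc] at hlb
        have := hd_nonneg x y
        nlinarith
    have honBase : ∀ x y : X, d x y ≤ γ0 → (1-ε) * d x y ≤ V x y := by
      intro x y h
      have hlb := LBV x y
      have hle : (1-ε) * d x y ≤ γ0 := by nlinarith [hd_nonneg x y]
      rwa [min_eq_right hle] at hlb
    -- bootstrap step
    have hstep : ∀ S : ℝ, 0 < S → (∀ a b : X, d a b ≤ S → (1-ε) * d a b ≤ V a b) →
        ∀ x y : X, d x y ≤ (9/8) * S → (1-ε) * d x y ≤ V x y := by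
      intro S hS hHon x y hxy
      obtain ⟨M, hxM, hyM, hMb, hMconn⟩ := Mexists x y
      have contF1 : Continuous (fun w => d x (π x w)) :=
        contD.comp (continuous_const.prodMk
          (hπ_cont.comp (continuous_const.prodMk continuous_id)))
      have contF2 : Continuous (fun w => d (π x w) w) :=
        contD.comp ((hπ_cont.comp (continuous_const.prodMk continuous_id)).prodMk
          continuous_id)
      have hKB : ∀ w, d x w ≤ (9/8) * S → d x (π x w) ≤ S → d (π x w) w ≤ S →
          d x (π x w) ≤ (15/16) * S ∧ d (π x w) w ≤ (15/16) * S ∧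
            (1-ε) * d x w ≤ V x w := by
        intro w hw h1 h2
        have hsum : V x w = V x (π x w) + V (π x w) w := F2 x w
        have hv1 : (1-ε) * d x (π x w) ≤ V x (π x w) := hHon x (π x w) h1
        have hv2 : (1-ε) * d (π x w) w ≤ V (π x w) w := hHon (π x w) w h2
        have htri := hd_tri x (π x w) w
        have hgoal3 : (1-ε) * d x w ≤ V x w := by nlinarith
        have hq := F3 x w (mid x w)
        have hdm1 : d x (mid x w) = d x w / 2 := hm1 x w
        have hdm2 : d (mid x w) w = d x w / 2 := hm2 x w
        have hVm1 : (V x (mid x w))^2 ≤ (d x (mid x w))^2 := by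
          nlinarith [Vabs x (mid x w), abs_nonneg (V x (mid x w)),
            sq_abs (V x (mid x w)), hd_nonneg x (mid x w)]
        have hVm2 : (V (mid x w) w)^2 ≤ (d (mid x w) w)^2 := by
          nlinarith [Vabs (mid x w) w, abs_nonneg (V (mid x w) w),
            sq_abs (V (mid x w) w), hd_nonneg (mid x w) w]
        have hVp1 : 0 ≤ V x (π x w) := Vnonneg _ _
        have hVp2 : 0 ≤ V (π x w) w := Vnonneg _ _
        have hdw : 0 ≤ d x w := hd_nonneg x w
        have hb1 : (V x (π x w))^2 ≤ (d x w)^2 / 2 := by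
          rw [hdm1] at hVm1
          rw [hdm2] at hVm2
          nlinarith [sq_nonneg (V (π x w) w)]
        have hb2 : (V (π x w) w)^2 ≤ (d x w)^2 / 2 := by
          rw [hdm1] at hVm1
          rw [hdm2] at hVm2
          nlinarith [sq_nonneg (V x (π x w))]
        have hbb : (d x w)^2 / 2 ≤ ((1-ε) * ((15/16)*S))^2 := by
          have hd2 : (d x w)^2 ≤ (81/64) * S^2 := by nlinarith
          have he1 : (81:ℝ)/100 ≤ (1-ε)^2 := by nlinarith
          have he2 : (81/100) * S^2 ≤ (1-ε)^2 * S^2 :=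
            mul_le_mul_of_nonneg_right he1 (sq_nonneg S)
          nlinarith
        have hbpos : 0 ≤ (1-ε) * ((15/16)*S) := by nlinarith
        have hVple1 : V x (π x w) ≤ (1-ε) * ((15/16)*S) := by
          nlinarith
        have hVple2 : V (π x w) w ≤ (1-ε) * ((15/16)*S) := by
          nlinarith
        have hε1' : (0:ℝ) < 1 - ε := by linarith
        refine ⟨?_, ?_, hgoal3⟩
        · nlinarith
        · nlinarith
      have hxdiag : d x (π x x) < S ∧ d (π x x) x < S := by
        have h0 : V x x = 0 := Vnull x x (hd_refl x)
        have hsum := F2 x x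
        have hp1 : 0 ≤ V x (π x x) := Vnonneg _ _
        have hp2 : 0 ≤ V (π x x) x := Vnonneg _ _
        have h1 : V x (π x x) = 0 := by linarith
        have h2 : V (π x x) x = 0 := by linarith
        constructor
        · rw [Vzero x (π x x) h1]; exact hS
        · rw [Vzero (π x x) x h2]; exact hS
      set Uo := {w : X | d x (π x w) < S ∧ d (π x w) w < S} with hUodef
      set Wo := {w : X | (15/16)*S < d x (π x w) ∨ (15/16)*S < d (π x w) w} with hWodef
      have hUoO : IsOpen Uo :=
        IsOpen.inter (isOpen_lt contF1 continuous_const)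
          (isOpen_lt contF2 continuous_const)
      have hWoO : IsOpen Wo :=
        (isOpen_lt continuous_const contF1).union (isOpen_lt continuous_const contF2)
      have hcov : M ⊆ Uo ∪ Wo := by
        intro w _
        by_cases h : w ∈ Uo
        · exact Or.inl h
        · right
          rw [hUodef, Set.mem_setOf_eq] at h
          rcases not_and_or.mp h with h | h
          · exact Or.inl (by rw [not_lt] at h; linarith)
          · exact Or.inr (by rw [not_lt] at h; linarith)
      have hdisj : ∀ w ∈ M, w ∈ Uo → w ∈ Wo → False := by
        intro w hw hU hW
        have hUu : d x (π x w) < S ∧ d (π x w) w < S := hU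
        have hKBw := hKB w (le_trans (hMb w hw) hxy) hUu.1.le hUu.2.le
        rcases hW with h | h
        · have : (15/16)*S < d x (π x w) := h
          linarith [hKBw.1]
        · have : (15/16)*S < d (π x w) w := h
          linarith [hKBw.2.1]
      have hne1 : (M ∩ Uo).Nonempty := ⟨x, hxM, hxdiag.1, hxdiag.2⟩
      by_cases hyU : y ∈ Uo
      · have hUu : d x (π x y) < S ∧ d (π x y) y < S := hyU
        exact (hKB y (le_trans (hMb y hyM) hxy) hUu.1.le hUu.2.le).2.2
      · have hyW : y ∈ Wo := (hcov hyM).resolve_left hyU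
        obtain ⟨w, hwM, hwU, hwW⟩ := hMconn Uo Wo hUoO hWoO hcov hne1 ⟨y, hyM, hyW⟩
        exact (hdisj w hwM hwU hwW).elim
    -- iterate the bootstrap
    have hiter : ∀ k : ℕ, ∀ a b : X, d a b ≤ γ0 * (9/8)^k → (1-ε) * d a b ≤ V a b := by
      intro k
      induction k with
      | zero =>
        intro a b hab
        exact honBase a b (by simpa using hab)
      | succ k ih =>
        intro a b hab
        apply hstep (γ0 * (9/8)^k) (by positivity) ih a b
        calc d a b ≤ γ0 * (9/8)^(k+1) := hab
          _ = (9/8) * (γ0 * (9/8)^k) := by ring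
    intro x y
    obtain ⟨k, hk⟩ : ∃ k : ℕ, d x y / γ0 < (9/8)^k :=
      pow_unbounded_of_one_lt _ (by norm_num)
    apply hiter k
    rw [div_lt_iff₀ hγ0pos] at hk
    nlinarith
  -- V equals d
  have Veq : ∀ x y : X, V x y = d x y := by
    intro x y
    apply le_antisymm (Vle x y)
    by_contra hcon
    push_neg at hcon
    have hd1 : 0 < d x y + 1 := by linarith [hd_nonneg x y]
    set ε := min (1/10) ((d x y - V x y)/(d x y + 1)) with hεdef
    have h1 : 0 < ε := by
      apply lt_min (by norm_num)
      apply div_pos (by linarith) hd1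
    have h2 : ε ≤ 1/10 := min_le_left _ _
    have h3 := mainLB ε h1 h2 x y
    have h4 : ε ≤ (d x y - V x y)/(d x y + 1) := min_le_right _ _
    have h5 : ε * (d x y + 1) ≤ d x y - V x y := by
      rw [le_div_iff₀ hd1] at h4
      exact h4
    nlinarith [hd_nonneg x y]
  refine ⟨Veq, ?_⟩
  intro x y
  have hsum := F2 x y
  rw [Veq x y, Veq x (π x y), Veq (π x y) y] at hsum
  have hq := F3 x y (mid x y)
  rw [Veq x (π x y), Veq (π x y) y, Veq x (mid x y), Veq (mid x y) y,
    hm1 x y, hm2 x y] at hq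
  rw [hsum] at hq
  have h6 : (d x (π x y) - d (π x y) y)^2 ≤ 0 := by nlinarith [hq]
  have h7 : (d x (π x y) - d (π x y) y)^2 = 0 := le_antisymm h6 (sq_nonneg _)
  have h8 : d x (π x y) - d (π x y) y = 0 :=
    (pow_eq_zero_iff (by norm_num : (2:ℕ) ≠ 0)).mp h7
  constructor <;> linarith
end

section
/- Let d be a pseudo-quasi-metric on a set X and let C : X × X → ℝ be nonnegative and satisfy the two conditions of Assumption 1 with respect to d. Let S ⊆ X and c > 0, define P : X × X → ℝ by P(x,y) = c if exactly one of x,y belongs to S and P(x,y) = 0 otherwise, and set d'(x,y) = d(x,y) + P(x,y) and C'(x,y) = C(x,y) + P(x,y). Then C' satisfies the two conditions of Assumption 1 with respect to d': (1) for every x ∈ X and sequence (y_i), C'(x,y_i) → 0 implies d'(x,y_i) → 0; and (2) for every x ∈ X and ε > 0 there exists δ > 0 such that (1−ε)·d'(y,z) ≤ C'(y,z) ≤ (1+ε)·d'(y,z) whenever d'(x,y) < δ and d'(x,z) < δ. -/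
open Filter
open scoped Classical

/-- The penalized local-metric approximation `C' = C + P` satisfies Assumption 1 with respect to
the penalized pseudo-quasi-metric `d' = d + P`. -/
theorem penalized_C_satisfies_assumption {X : Type*}
    (d : X → X → ℝ)
    (hd_refl : ∀ x, d x x = 0)
    (hd_nonneg : ∀ x y, 0 ≤ d x y)
    (hd_tri : ∀ x y z, d x z ≤ d x y + d y z)
    (C : X → X → ℝ)
    (hC_nonneg : ∀ x y, 0 ≤ C x y)
    (hC1 : ∀ (x : X) (y : ℕ → X), Tendsto (fun i => C x (y i)) atTop (nhds 0) →
      Tendsto (fun i => d x (y i)) atTop (nhds 0))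
    (hC2 : ∀ (x : X), ∀ ε > (0 : ℝ), ∃ δ > (0 : ℝ), ∀ y z, d x y < δ → d x z < δ →
      (1 - ε) * d y z ≤ C y z ∧ C y z ≤ (1 + ε) * d y z)
    (S : Set X) (c : ℝ) (hc : 0 < c)
    (P : X → X → ℝ)
    (hP : ∀ x y, P x y = if (x ∈ S ↔ y ∈ S) then 0 else c)
    (d' : X → X → ℝ) (hd' : ∀ x y, d' x y = d x y + P x y)
    (C' : X → X → ℝ) (hC' : ∀ x y, C' x y = C x y + P x y) :
    (∀ (x : X) (y : ℕ → X), Tendsto (fun i => C' x (y i)) atTop (nhds 0) →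
      Tendsto (fun i => d' x (y i)) atTop (nhds 0)) ∧
    (∀ (x : X), ∀ ε > (0 : ℝ), ∃ δ > (0 : ℝ), ∀ y z, d' x y < δ → d' x z < δ →
      (1 - ε) * d' y z ≤ C' y z ∧ C' y z ≤ (1 + ε) * d' y z) := by
  have hP_nonneg : ∀ x y, 0 ≤ P x y := by
    intro x y; rw [hP]; split <;> [rfl; exact hc.le]
  constructor
  · intro x y hten
    have hCt : Tendsto (fun i => C x (y i)) atTop (nhds 0) := by
      refine squeeze_zero (fun i => hC_nonneg _ _) (fun i => ?_) hten
      rw [hC']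
      linarith [hP_nonneg x (y i)]
    have hPt : Tendsto (fun i => P x (y i)) atTop (nhds 0) := by
      refine squeeze_zero (fun i => hP_nonneg _ _) (fun i => ?_) hten
      rw [hC']
      linarith [hC_nonneg x (y i)]
    have hdt := hC1 x y hCt
    have := hdt.add hPt
    simpa [hd'] using this
  · intro x ε hε
    obtain ⟨δ, hδ, h⟩ := hC2 x ε hε
    refine ⟨min δ c, lt_min hδ hc, fun y z hy hz => ?_⟩
    have hPy : P x y = 0 := by
      have : P x y < c := by
        have := hd' x y
        have := hd_nonneg x y
        have h1 : d' x y < c := lt_of_lt_of_le hy (min_le_right _ _)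
        linarith
      rw [hP] at this ⊢
      split_ifs at this ⊢ <;> [rfl; linarith]
    have hPz : P x z = 0 := by
      have : P x z < c := by
        have := hd' x z
        have := hd_nonneg x z
        have h1 : d' x z < c := lt_of_lt_of_le hz (min_le_right _ _)
        linarith
      rw [hP] at this ⊢
      split_ifs at this ⊢ <;> [rfl; linarith]
    have hxy : x ∈ S ↔ y ∈ S := by
      rw [hP] at hPy; by_contra hcon; simp [hcon] at hPy; linarith
    have hxz : x ∈ S ↔ z ∈ S := by
      rw [hP] at hPz; by_contra hcon; simp [hcon] at hPz; linarith
    have hPyz : P y z = 0 := by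
      rw [hP]; simp [hxy.symm.trans hxz]
    have hdy : d x y < δ := by
      have := hd' x y
      have h1 : d' x y < δ := lt_of_lt_of_le hy (min_le_left _ _)
      linarith [hP_nonneg x y]
    have hdz : d x z < δ := by
      have := hd' x z
      have h1 : d' x z < δ := lt_of_lt_of_le hz (min_le_left _ _)
      linarith [hP_nonneg x z]
    have := h y z hdy hdz
    rw [hd', hC', hPyz]
    simpa using this
end

section
/- Let (X,d) be a weakly symmetric pseudo-quasi-metric space that is compact with respect to the topology induced by d, and let C : X × X → ℝ be continuous (with respect to the product of the induced topology with itself) and satisfy Assumption 1 with respect to d. Define r : X × X → ℝ by r(x,y) = C(x,y)/d(x,y) if d(x,y) ≠ 0 and r(x,y) = 1 if d(x,y) = 0. Then r is continuous with respect to the product of the topology induced by d with itself. -/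
open Filter Topology
open scoped Classical

lemma inducedTop_isBasis {X : Type*} (d : X → X → ℝ)
    (hd_refl : ∀ x, d x x = 0)
    (hd_tri : ∀ x y z, d x z ≤ d x y + d y z) :
    @TopologicalSpace.IsTopologicalBasis X (inducedTop d)
      {s | ∃ x r, 0 < r ∧ s = {y | d x y < r}} := by
  letI := inducedTop d
  refine ⟨?_, ?_, rfl⟩
  · rintro t₁ ⟨x₁, r₁, hr₁, rfl⟩ t₂ ⟨x₂, r₂, hr₂, rfl⟩ x ⟨h1, h2⟩
    simp only [Set.mem_setOf_eq] at h1 h2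
    refine ⟨{y | d x y < min (r₁ - d x₁ x) (r₂ - d x₂ x)},
      ⟨x, _, lt_min (by linarith) (by linarith), rfl⟩, ?_, ?_⟩
    · simp [hd_refl x, lt_min_iff]; constructor <;> linarith
    · intro y hy
      simp only [Set.mem_setOf_eq, lt_min_iff] at hy
      constructor
      · have := hd_tri x₁ x y; simp only [Set.mem_setOf_eq]; linarith [hy.1]
      · have := hd_tri x₂ x y; simp only [Set.mem_setOf_eq]; linarith [hy.2]
  · ext x
    simp only [Set.mem_sUnion, Set.mem_univ, iff_true]
    exact ⟨{y | d x y < 1}, ⟨x, 1, one_pos, rfl⟩, by simp [hd_refl x]⟩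

lemma inducedTop_mem_nhds {X : Type*} (d : X → X → ℝ)
    (hd_refl : ∀ x, d x x = 0)
    (hd_tri : ∀ x y z, d x z ≤ d x y + d y z)
    (x : X) (s : Set X) :
    s ∈ @nhds X (inducedTop d) x ↔ ∃ ε > 0, ∀ y, d x y < ε → y ∈ s := by
  letI := inducedTop d
  rw [(inducedTop_isBasis d hd_refl hd_tri).mem_nhds_iff]
  constructor
  · rintro ⟨t, ⟨x₀, ρ, hρ, rfl⟩, hx, hts⟩
    simp only [Set.mem_setOf_eq] at hx
    refine ⟨ρ - d x₀ x, by linarith, fun y hy => hts ?_⟩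
    simp only [Set.mem_setOf_eq]
    have := hd_tri x₀ x y; linarith
  · rintro ⟨ε, hε, h⟩
    exact ⟨{y | d x y < ε}, ⟨x, ε, hε, rfl⟩, by simp [hd_refl x, hε], h⟩

lemma rev_small {X : Type*} (d : X → X → ℝ)
    (hd_nonneg : ∀ x y, 0 ≤ d x y)
    (hws : ∀ (x : X) (y : ℕ → X), Tendsto (fun i => d x (y i)) atTop (nhds 0) →
      Tendsto (fun i => d (y i) x) atTop (nhds 0))
    (x : X) : ∀ ε > (0:ℝ), ∃ δ > (0:ℝ), ∀ y, d x y < δ → d y x < ε := by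
  intro ε hε
  by_contra h
  push_neg at h
  have hch : ∀ n : ℕ, ∃ y, d x y < 1 / (n + 1) ∧ ε ≤ d y x := by
    intro n
    obtain ⟨y, hy1, hy2⟩ := h (1 / (n + 1)) (by positivity)
    exact ⟨y, hy1, hy2⟩
  choose y hy1 hy2 using hch
  have h0 : Tendsto (fun i => d x (y i)) atTop (nhds 0) := by
    have hb : Tendsto (fun n : ℕ => 1 / ((n : ℝ) + 1)) atTop (nhds 0) :=
      tendsto_one_div_add_atTop_nhds_zero_nat
    exact squeeze_zero (fun n => hd_nonneg x (y n)) (fun n => (hy1 n).le) hb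
  have h1 := hws x y h0
  have := (h1.eventually (gt_mem_nhds hε)).exists
  obtain ⟨n, hn⟩ := this
  exact absurd (hy2 n) (not_le.mpr hn)

/-- The ratio `r(x,y) = C(x,y)/d(x,y)` (set to `1` on the zero set of `d`) is continuous on a
compact weakly symmetric pseudo-quasi-metric space when `C` satisfies Assumption 1. -/
theorem ratio_continuous {X : Type*}
    (d : X → X → ℝ)
    (hd_refl : ∀ x, d x x = 0)
    (hd_nonneg : ∀ x y, 0 ≤ d x y)
    (hd_tri : ∀ x y z, d x z ≤ d x y + d y z)
    (hws : ∀ (x : X) (y : ℕ → X), Tendsto (fun i => d x (y i)) atTop (nhds 0) →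
      Tendsto (fun i => d (y i) x) atTop (nhds 0))
    (hcomp : @CompactSpace X (inducedTop d))
    (C : X → X → ℝ)
    (hC_cont : @Continuous (X × X) ℝ
      (@instTopologicalSpaceProd X X (inducedTop d) (inducedTop d)) _
      (fun p => C p.1 p.2))
    (hC1 : ∀ (x : X) (y : ℕ → X), Tendsto (fun i => C x (y i)) atTop (nhds 0) →
      Tendsto (fun i => d x (y i)) atTop (nhds 0))
    (hC2 : ∀ (x : X), ∀ ε > (0 : ℝ), ∃ δ > (0 : ℝ), ∀ y z, d x y < δ → d x z < δ →
      (1 - ε) * d y z ≤ C y z ∧ C y z ≤ (1 + ε) * d y z)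
    (r : X → X → ℝ)
    (hr : ∀ x y, r x y = if d x y = 0 then 1 else C x y / d x y) :
    @Continuous (X × X) ℝ
      (@instTopologicalSpaceProd X X (inducedTop d) (inducedTop d)) _
      (fun p => r p.1 p.2) := by
  letI : TopologicalSpace X := inducedTop d
  have hC_cont' : Continuous (fun p : X × X => C p.1 p.2) := hC_cont
  rw [continuous_iff_continuousAt]
  intro p
  -- neighborhood helper
  have hmem : ∀ δ > (0:ℝ), {q : X × X | d p.1 q.1 < δ ∧ d p.2 q.2 < δ} ∈ 𝓝 p := by
    intro δ hδ
    have h1 : {x | d p.1 x < δ} ∈ 𝓝 p.1 :=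
      (inducedTop_mem_nhds d hd_refl hd_tri p.1 _).mpr ⟨δ, hδ, fun y hy => hy⟩
    have h2 : {y | d p.2 y < δ} ∈ 𝓝 p.2 :=
      (inducedTop_mem_nhds d hd_refl hd_tri p.2 _).mpr ⟨δ, hδ, fun y hy => hy⟩
    have := Filter.prod_mem_prod h1 h2
    rw [← nhds_prod_eq] at this
    exact this
  by_cases h0 : d p.1 p.2 = 0
  · -- case d p.1 p.2 = 0 : r p = 1
    have hrp : r p.1 p.2 = 1 := by rw [hr]; simp [h0]
    unfold ContinuousAt
    rw [Metric.tendsto_nhds]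
    intro ε hε
    obtain ⟨δ, hδ, hδC⟩ := hC2 p.1 (ε/2) (by positivity)
    filter_upwards [hmem δ hδ] with q hq
    obtain ⟨hq1, hq2⟩ := hq
    have hq2' : d p.1 q.2 < δ := by
      have := hd_tri p.1 p.2 q.2; rw [h0] at this; linarith
    obtain ⟨hl, hu⟩ := hδC q.1 q.2 hq1 hq2'
    rw [Real.dist_eq, hrp]
    by_cases hdq : d q.1 q.2 = 0
    · rw [hr]; simp [hdq, hε]
    · have hdq' : 0 < d q.1 q.2 := lt_of_le_of_ne (hd_nonneg _ _) (Ne.symm hdq)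
      rw [hr, if_neg hdq]
      rw [abs_lt]
      have hL : 1 - ε/2 ≤ C q.1 q.2 / d q.1 q.2 := (le_div_iff₀ hdq').mpr hl
      have hU : C q.1 q.2 / d q.1 q.2 ≤ 1 + ε/2 := (div_le_iff₀ hdq').mpr hu
      constructor <;> linarith
  · -- case d p.1 p.2 ≠ 0
    have hdp : 0 < d p.1 p.2 := lt_of_le_of_ne (hd_nonneg _ _) (Ne.symm h0)
    -- d is continuous at p
    have hd_tendsto : Tendsto (fun q : X × X => d q.1 q.2) (𝓝 p) (𝓝 (d p.1 p.2)) := by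
      rw [Metric.tendsto_nhds]
      intro ε hε
      obtain ⟨δ₁, hδ₁, hrev1⟩ := rev_small d hd_nonneg hws p.1 (ε/4) (by positivity)
      obtain ⟨δ₂, hδ₂, hrev2⟩ := rev_small d hd_nonneg hws p.2 (ε/4) (by positivity)
      set δ := min (min δ₁ δ₂) (ε/4) with hδdef
      have hδpos : 0 < δ := by positivity
      filter_upwards [hmem δ hδpos] with q hq
      obtain ⟨hq1, hq2⟩ := hq
      have hb1 : d q.1 p.1 < ε/4 := hrev1 q.1 (lt_of_lt_of_le hq1 (le_trans (min_le_left _ _) (min_le_left _ _)))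
      have hb2 : d q.2 p.2 < ε/4 := hrev2 q.2 (lt_of_lt_of_le hq2 (le_trans (min_le_left _ _) (min_le_right _ _)))
      have hq1' : d p.1 q.1 < ε/4 := lt_of_lt_of_le hq1 (min_le_right _ _)
      have hq2' : d p.2 q.2 < ε/4 := lt_of_lt_of_le hq2 (min_le_right _ _)
      rw [Real.dist_eq, abs_lt]
      constructor
      · -- d p - d q < ε i.e. -(ε) < d q - d p
        have t1 : d p.1 p.2 ≤ d p.1 q.1 + d q.1 p.2 := hd_tri _ _ _
        have t2 : d q.1 p.2 ≤ d q.1 q.2 + d q.2 p.2 := hd_tri _ _ _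
        linarith
      · have t1 : d q.1 q.2 ≤ d q.1 p.1 + d p.1 q.2 := hd_tri _ _ _
        have t2 : d p.1 q.2 ≤ d p.1 p.2 + d p.2 q.2 := hd_tri _ _ _
        linarith
    have hC_tendsto : Tendsto (fun q : X × X => C q.1 q.2) (𝓝 p) (𝓝 (C p.1 p.2)) :=
      hC_cont'.continuousAt
    have hdiv : Tendsto (fun q : X × X => C q.1 q.2 / d q.1 q.2) (𝓝 p)
        (𝓝 (C p.1 p.2 / d p.1 p.2)) := hC_tendsto.div hd_tendsto h0
    have hev : ∀ᶠ q : X × X in 𝓝 p, C q.1 q.2 / d q.1 q.2 = r q.1 q.2 := by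
      have : ∀ᶠ q : X × X in 𝓝 p, d q.1 q.2 ≠ 0 := by
        have := hd_tendsto.eventually (eventually_gt_nhds (half_lt_self hdp))
        filter_upwards [this] with q hq
        exact ne_of_gt (lt_of_le_of_lt (by positivity) hq)
      filter_upwards [this] with q hq
      rw [hr, if_neg hq]
    have hrpeq : r p.1 p.2 = C p.1 p.2 / d p.1 p.2 := by rw [hr, if_neg h0]
    unfold ContinuousAt
    show Tendsto (fun q : X × X => r q.1 q.2) (𝓝 p) (𝓝 (r p.1 p.2))
    rw [hrpeq]
    exact hdiv.congr' hev
end
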